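/- arXiv:math/9911121 — 6 statements merged into one kernel-verified Lean document; each statement's English description precedes it below -/
import Mathlib

section
/- Let a > 0 be real, Ω ⊆ ℂ open, and h, F holomorphic functions on Ω with F′ nonvanishing. On the open set U = {(x,y,z) ∈ ℝ³ : x+iy ∈ Ω, z + h(x+iy) ≠ 0}, the smooth function u(x,y,z) = log( 4a·(z+h)(z+h̄)·|F′|² / (1 + a|F|²)² ) (where h, F, F′ are evaluated at x+iy and h̄ denotes the complex conjugate, so that (z+h)(z+h̄) = |z+h|² > 0 and 1+a|F|² > 0) satisfies the SU(∞) Toda field equation u_xx + u_yy + (e^u)_zz = 0 on U. -/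
open Complex

/-- Partial derivative in the first variable of a function of three real variables. -/
noncomputable def pdx (f : ℝ → ℝ → ℝ → ℝ) : ℝ → ℝ → ℝ → ℝ :=
  fun x y z => deriv (fun t => f t y z) x

/-- Partial derivative in the second variable. -/
noncomputable def pdy (f : ℝ → ℝ → ℝ → ℝ) : ℝ → ℝ → ℝ → ℝ :=
  fun x y z => deriv (fun t => f x t z) y

/-- Partial derivative in the third variable. -/
noncomputable def pdz (f : ℝ → ℝ → ℝ → ℝ) : ℝ → ℝ → ℝ → ℝ :=
  fun x y z => deriv (fun t => f x y t) z

/-! ### Auxiliary machinery -/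

lemma hasDerivAt_comp_line {G : ℂ → ℂ} {g : ℂ} {c : ℝ → ℂ} {c' : ℂ} {t : ℝ}
    (hG : HasDerivAt G g (c t)) (hc : HasDerivAt c c' t) :
    HasDerivAt (fun s => G (c s)) (g * c') t := by
  have := (hG.hasFDerivAt.restrictScalars ℝ).comp_hasDerivAt t hc
  have h2 : HasDerivAt (G ∘ c) (g * c') t := by simpa [mul_comm] using this
  exact h2

lemma hasDerivAt_re_comp {c : ℝ → ℂ} {c' : ℂ} {t : ℝ} (hc : HasDerivAt c c' t) :
    HasDerivAt (fun s => (c s).re) c'.re t :=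
  Complex.reCLM.hasFDerivAt.comp_hasDerivAt t hc

lemma hasDerivAt_conj_comp {c : ℝ → ℂ} {c' : ℂ} {t : ℝ} (hc : HasDerivAt c c' t) :
    HasDerivAt (fun s => (starRingEnd ℂ) (c s)) ((starRingEnd ℂ) c') t :=
  Complex.conjCLE.toContinuousLinearMap.hasFDerivAt.comp_hasDerivAt t hc

lemma hasDerivAt_re_conj_mul {c d : ℝ → ℂ} {c' d' : ℂ} {t : ℝ}
    (hc : HasDerivAt c c' t) (hd : HasDerivAt d d' t) :
    HasDerivAt (fun s => ((starRingEnd ℂ) (c s) * d s).re)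
      (((starRingEnd ℂ) c' * d t).re + ((starRingEnd ℂ) (c t) * d').re) t := by
  have := hasDerivAt_re_comp ((hasDerivAt_conj_comp hc).mul hd)
  simpa using this

lemma hasDerivAt_normSq_comp {c : ℝ → ℂ} {c' : ℂ} {t : ℝ} (hc : HasDerivAt c c' t) :
    HasDerivAt (fun s => Complex.normSq (c s)) (2 * ((starRingEnd ℂ) (c t) * c').re) t := by
  have h1 := hasDerivAt_re_conj_mul hc hc
  have h2 : (fun s => ((starRingEnd ℂ) (c s) * c s).re) = fun s => Complex.normSq (c s) := by
    funext s; rw [mul_comm, Complex.mul_conj]; simp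
  rw [h2] at h1
  convert h1 using 1
  simp [Complex.mul_re, Complex.conj_re, Complex.conj_im]; ring

lemma hasDerivAt_lineX (y x : ℝ) : HasDerivAt (fun t : ℝ => (t : ℂ) + y * Complex.I) 1 x := by
  simpa using (Complex.ofRealCLM.hasDerivAt (x := x)).add_const ((y : ℂ) * Complex.I)

lemma hasDerivAt_lineY (x y : ℝ) : HasDerivAt (fun t : ℝ => (x : ℂ) + t * Complex.I) Complex.I y := by
  simpa using ((Complex.ofRealCLM.hasDerivAt (x := y)).mul_const Complex.I).const_add (x : ℂ)

/-- First-derivative value of `log (c₀ + c₁·|G|²)` along a line with direction `e`. -/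
noncomputable def Dval (c₁ : ℝ) (w w' e : ℂ) (P : ℝ) : ℝ :=
  c₁ * (2 * ((starRingEnd ℂ) w * (w' * e)).re) / P

/-- Second-derivative value of `log (c₀ + c₁·|G|²)` along a line with direction `e`. -/
noncomputable def Sval (c₁ : ℝ) (w w' w'' e : ℂ) (P : ℝ) : ℝ :=
  (c₁ * (2 * (Complex.normSq (w' * e) + ((starRingEnd ℂ) w * (w'' * e * e)).re)) * P
    - (c₁ * (2 * ((starRingEnd ℂ) w * (w' * e)).re))^2) / P^2

section lineLemmas
variable {G G' G'' : ℂ → ℂ} {Ω : Set ℂ}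

/-- First derivative of `log (c₀ + c₁ * |G ∘ L|²)` along a line. -/
lemma loglineD (hG : ∀ ζ ∈ Ω, HasDerivAt G (G' ζ) ζ)
    {L : ℝ → ℂ} {e : ℂ} (hL : ∀ s, HasDerivAt L e s)
    (c₀ c₁ : ℝ) {t : ℝ} (ht : L t ∈ Ω)
    (hP : c₀ + c₁ * Complex.normSq (G (L t)) ≠ 0) :
    HasDerivAt (fun s => Real.log (c₀ + c₁ * Complex.normSq (G (L s))))
      (Dval c₁ (G (L t)) (G' (L t)) e (c₀ + c₁ * Complex.normSq (G (L t)))) t := by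
  have hc : HasDerivAt (fun s => G (L s)) (G' (L t) * e) t :=
    hasDerivAt_comp_line (hG _ ht) (hL t)
  have hP' : HasDerivAt (fun s => c₀ + c₁ * Complex.normSq (G (L s)))
      (c₁ * (2 * ((starRingEnd ℂ) (G (L t)) * (G' (L t) * e)).re)) t :=
    ((hasDerivAt_normSq_comp hc).const_mul c₁).const_add c₀
  exact hP'.log hP

/-- Derivative of the first-derivative function itself. -/
lemma QQD (hG : ∀ ζ ∈ Ω, HasDerivAt G (G' ζ) ζ) (hG' : ∀ ζ ∈ Ω, HasDerivAt G' (G'' ζ) ζ)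
    {L : ℝ → ℂ} {e : ℂ} (hL : ∀ s, HasDerivAt L e s)
    (c₀ c₁ : ℝ) {t : ℝ} (ht : L t ∈ Ω)
    (hP : c₀ + c₁ * Complex.normSq (G (L t)) ≠ 0) :
    HasDerivAt (fun s => Dval c₁ (G (L s)) (G' (L s)) e (c₀ + c₁ * Complex.normSq (G (L s))))
      (Sval c₁ (G (L t)) (G' (L t)) (G'' (L t)) e (c₀ + c₁ * Complex.normSq (G (L t)))) t := by
  have hc : HasDerivAt (fun s => G (L s)) (G' (L t) * e) t :=
    hasDerivAt_comp_line (hG _ ht) (hL t)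
  have hd : HasDerivAt (fun s => G' (L s) * e) (G'' (L t) * e * e) t :=
    (hasDerivAt_comp_line (hG' _ ht) (hL t)).mul_const e
  have hN : HasDerivAt (fun s => c₁ * (2 * ((starRingEnd ℂ) (G (L s)) * (G' (L s) * e)).re))
      (c₁ * (2 * (Complex.normSq (G' (L t) * e)
        + ((starRingEnd ℂ) (G (L t)) * (G'' (L t) * e * e)).re))) t := by
    have h0 := ((hasDerivAt_re_conj_mul hc hd).const_mul 2).const_mul c₁
    have h3 : ((starRingEnd ℂ) (G' (L t) * e) * (G' (L t) * e)).re
        = Complex.normSq (G' (L t) * e) := by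
      rw [mul_comm, Complex.mul_conj]; simp
    rw [← h3]
    exact h0
  have hD : HasDerivAt (fun s => c₀ + c₁ * Complex.normSq (G (L s)))
      (c₁ * (2 * ((starRingEnd ℂ) (G (L t)) * (G' (L t) * e)).re)) t :=
    ((hasDerivAt_normSq_comp hc).const_mul c₁).const_add c₀
  have := hN.div hD hP
  unfold Dval Sval
  refine this.congr_deriv ?_
  ring

end lineLemmas

/-- The two-line (Laplacian) sum for `log (c₀ + c₁ |G|²)`. -/
lemma lap_sum (c₀ c₁ : ℝ) (w w' w'' : ℂ) (P : ℝ) (hP : P = c₀ + c₁ * Complex.normSq w) :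
    Sval c₁ w w' w'' 1 P + Sval c₁ w w' w'' Complex.I P
      = 4 * c₀ * c₁ * Complex.normSq w' / P^2 := by
  unfold Sval
  rw [← add_div]
  congr 1
  subst hP
  simp only [Complex.normSq_apply, Complex.mul_re, Complex.mul_im, Complex.conj_re,
    Complex.conj_im, Complex.I_re, Complex.I_im, Complex.one_re, Complex.one_im]
  ring


/-- Second derivative along a coordinate line of the Toda potential `u`. -/
lemma line_lap
    {a : ℝ} (ha : 0 < a) {Ω : Set ℂ} {h h1 h2 F F' F2 F3 : ℂ → ℂ}
    (hdh : ∀ ζ ∈ Ω, HasDerivAt h (h1 ζ) ζ)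
    (hdh2 : ∀ ζ ∈ Ω, HasDerivAt h1 (h2 ζ) ζ)
    (hF : ∀ ζ ∈ Ω, HasDerivAt F (F' ζ) ζ)
    (hdF' : ∀ ζ ∈ Ω, HasDerivAt F' (F2 ζ) ζ)
    (hdF'' : ∀ ζ ∈ Ω, HasDerivAt F2 (F3 ζ) ζ)
    (hF'ne : ∀ ζ ∈ Ω, F' ζ ≠ 0)
    {z : ℝ} {L : ℝ → ℂ} {e : ℂ} (hL : ∀ s, HasDerivAt L e s)
    {V : Set ℝ} (hV : IsOpen V) {x : ℝ} (hxV : x ∈ V)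
    (hVmem : ∀ t ∈ V, L t ∈ Ω ∧ (z : ℂ) + h (L t) ≠ 0)
    {f : ℝ → ℝ}
    (hfval : ∀ t, f t = Real.log (4 * a * Complex.normSq ((z : ℂ) + h (L t)) *
        (‖F' (L t)‖)^2 / (1 + a * (‖F (L t)‖)^2)^2)) :
    deriv (fun t => deriv f t) x
      = Sval 1 ((z:ℂ) + h (L x)) (h1 (L x)) (h2 (L x)) e
          (0 + 1 * Complex.normSq ((z:ℂ) + h (L x)))
      + Sval 1 (F' (L x)) (F2 (L x)) (F3 (L x)) e
          (0 + 1 * Complex.normSq (F' (L x)))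
      - 2 * Sval a (F (L x)) (F' (L x)) (F2 (L x)) e
          (1 + a * Complex.normSq (F (L x))) := by
  have hG1 : ∀ ζ ∈ Ω, HasDerivAt (fun w => (z:ℂ) + h w) (h1 ζ) ζ :=
    fun ζ hζ => (hdh ζ hζ).const_add _
  set φ : ℝ → ℝ := fun s => Real.log (4*a)
      + Real.log (0 + 1 * Complex.normSq ((z:ℂ) + h (L s)))
      + Real.log (0 + 1 * Complex.normSq (F' (L s)))
      - 2 * Real.log (1 + a * Complex.normSq (F (L s))) with hφ
  have hP1 : ∀ t ∈ V, (0:ℝ) + 1 * Complex.normSq ((z:ℂ) + h (L t)) ≠ 0 := by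
    intro t ht
    simp only [zero_add, one_mul]
    exact (Complex.normSq_pos.2 (hVmem t ht).2).ne'
  have hP2 : ∀ t ∈ V, (0:ℝ) + 1 * Complex.normSq (F' (L t)) ≠ 0 := by
    intro t ht
    simp only [zero_add, one_mul]
    exact (Complex.normSq_pos.2 (hF'ne _ (hVmem t ht).1)).ne'
  have hP3 : ∀ t : ℝ, (1:ℝ) + a * Complex.normSq (F (L t)) ≠ 0 := by
    intro t
    have := Complex.normSq_nonneg (F (L t))
    positivity
  have hval : ∀ t ∈ V, f t = φ t := by
    intro t ht
    have hb1 : (0:ℝ) < Complex.normSq ((z:ℂ) + h (L t)) :=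
      Complex.normSq_pos.2 (hVmem t ht).2
    have hb2 : (0:ℝ) < Complex.normSq (F' (L t)) :=
      Complex.normSq_pos.2 (hF'ne _ (hVmem t ht).1)
    have hb3 : (0:ℝ) < 1 + a * Complex.normSq (F (L t)) := by
      have := Complex.normSq_nonneg (F (L t)); positivity
    have h4a : (0:ℝ) < 4 * a := by linarith
    rw [hfval t, hφ, Complex.sq_norm, Complex.sq_norm,
      Real.log_div (mul_ne_zero (mul_ne_zero h4a.ne' hb1.ne') hb2.ne')
        (pow_ne_zero 2 hb3.ne'),
      Real.log_mul (mul_ne_zero h4a.ne' hb1.ne') hb2.ne',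
      Real.log_mul h4a.ne' hb1.ne', Real.log_pow]
    simp only [zero_add, one_mul]
    push_cast
    ring
  set D : ℝ → ℝ := fun t =>
      Dval 1 ((z:ℂ) + h (L t)) (h1 (L t)) e (0 + 1 * Complex.normSq ((z:ℂ) + h (L t)))
      + Dval 1 (F' (L t)) (F2 (L t)) e (0 + 1 * Complex.normSq (F' (L t)))
      - 2 * Dval a (F (L t)) (F' (L t)) e (1 + a * Complex.normSq (F (L t))) with hD
  have hφD : ∀ t ∈ V, HasDerivAt φ (D t) t := by
    intro t ht
    have l1 := loglineD hG1 hL 0 1 (hVmem t ht).1 (hP1 t ht)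
    have l2 := loglineD hdF' hL 0 1 (hVmem t ht).1 (hP2 t ht)
    have l3 := loglineD hF hL 1 a (hVmem t ht).1 (hP3 t)
    exact ((l1.const_add (Real.log (4*a))).add l2).sub (l3.const_mul 2)
  have hfD : ∀ t ∈ V, deriv f t = D t := by
    intro t ht
    have hev : f =ᶠ[nhds t] φ := Filter.eventuallyEq_of_mem (hV.mem_nhds ht) hval
    rw [Filter.EventuallyEq.deriv_eq hev]
    exact (hφD t ht).deriv
  have hq1 := QQD hG1 hdh2 hL 0 1 (hVmem x hxV).1 (hP1 x hxV)
  have hq2 := QQD hdF' hdF'' hL 0 1 (hVmem x hxV).1 (hP2 x hxV)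
  have hq3 := QQD hF hdF' hL 1 a (hVmem x hxV).1 (hP3 x)
  have hev2 : (fun t => deriv f t) =ᶠ[nhds x] D :=
    Filter.eventuallyEq_of_mem (hV.mem_nhds hxV) hfD
  rw [Filter.EventuallyEq.deriv_eq hev2]
  exact ((hq1.add hq2).sub (hq3.const_mul 2)).deriv

/-- the explicit function
`u(x,y,z) = log( 4a·|z+h|²·|F′|² / (1 + a|F|²)² )`, with `h, F` holomorphic on `Ω` and
`F′` nonvanishing, is smooth on `U = {(x,y,z) : x+iy ∈ Ω, z + h(x+iy) ≠ 0}` and satisfies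
the SU(∞) Toda field equation `u_xx + u_yy + (e^u)_zz = 0` there.  (Here
`(z+h)(z+h̄) = |z+h|²` is expressed via `Complex.normSq`.) -/
theorem toda_solution_from_holomorphic_data
    (a : ℝ) (ha : 0 < a)
    (Ω : Set ℂ) (hΩ : IsOpen Ω)
    (h F F' : ℂ → ℂ)
    (hh : DifferentiableOn ℂ h Ω)
    (hF : ∀ ζ ∈ Ω, HasDerivAt F (F' ζ) ζ)
    (hF' : ∀ ζ ∈ Ω, F' ζ ≠ 0)
    (u : ℝ → ℝ → ℝ → ℝ)
    (hu : ∀ x y z : ℝ,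
      u x y z = Real.log (4 * a * Complex.normSq ((z : ℂ) + h (x + y * Complex.I)) *
        (‖F' (x + y * Complex.I)‖)^2 /
        (1 + a * (‖F (x + y * Complex.I)‖)^2)^2)) :
    ContDiffOn ℝ (⊤ : ℕ∞) (fun p : ℝ × ℝ × ℝ => u p.1 p.2.1 p.2.2)
      {p : ℝ × ℝ × ℝ | (p.1 + p.2.1 * Complex.I) ∈ Ω ∧
        (p.2.2 : ℂ) + h (p.1 + p.2.1 * Complex.I) ≠ 0} ∧
    ∀ x y z : ℝ, (x + y * Complex.I) ∈ Ω → (z : ℂ) + h (x + y * Complex.I) ≠ 0 →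
      pdx (pdx u) x y z + pdy (pdy u) x y z +
        pdz (pdz (fun x' y' z' => Real.exp (u x' y' z'))) x y z = 0 := by
  -- analytic structure of the data
  have hanh : AnalyticOnNhd ℂ h Ω := hh.analyticOnNhd hΩ
  have hdh : ∀ ζ ∈ Ω, HasDerivAt h (deriv h ζ) ζ := fun ζ hζ =>
    (hh.differentiableAt (hΩ.mem_nhds hζ)).hasDerivAt
  have hdh2 : ∀ ζ ∈ Ω, HasDerivAt (deriv h) (deriv (deriv h) ζ) ζ := fun ζ hζ =>
    ((hanh.deriv ζ hζ).differentiableAt).hasDerivAt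
  have hdFΩ : DifferentiableOn ℂ F Ω := fun ζ hζ =>
    (hF ζ hζ).differentiableAt.differentiableWithinAt
  have hanF : AnalyticOnNhd ℂ F Ω := hdFΩ.analyticOnNhd hΩ
  have hF'eq : ∀ ζ ∈ Ω, deriv F ζ = F' ζ := fun ζ hζ => (hF ζ hζ).deriv
  have hdF' : ∀ ζ ∈ Ω, HasDerivAt F' (deriv (deriv F) ζ) ζ := by
    intro ζ hζ
    have h1 : HasDerivAt (deriv F) (deriv (deriv F) ζ) ζ :=
      ((hanF.deriv ζ hζ).differentiableAt).hasDerivAt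
    exact h1.congr_of_eventuallyEq <| Filter.eventuallyEq_of_mem (hΩ.mem_nhds hζ)
      (fun w hw => ((hF w hw).deriv).symm)
  have hanF1 : AnalyticOnNhd ℂ (deriv F) Ω := hanF.deriv
  have hanF2 : AnalyticOnNhd ℂ (deriv (deriv F)) Ω := hanF1.deriv
  have hdF'' : ∀ ζ ∈ Ω, HasDerivAt (deriv (deriv F)) (deriv (deriv (deriv F)) ζ) ζ :=
    fun ζ hζ => ((hanF2 ζ hζ).differentiableAt).hasDerivAt
  -- the domain is open
  have hζc : Continuous (fun p : ℝ × ℝ × ℝ => (p.1 : ℂ) + (p.2.1 : ℂ) * Complex.I) :=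
    (Complex.continuous_ofReal.comp continuous_fst).add
      ((Complex.continuous_ofReal.comp (continuous_fst.comp continuous_snd)).mul continuous_const)
  have hU1 : IsOpen ((fun p : ℝ × ℝ × ℝ => (p.1 : ℂ) + (p.2.1 : ℂ) * Complex.I) ⁻¹' Ω) :=
    hΩ.preimage hζc
  have hgc : ContinuousOn (fun p : ℝ × ℝ × ℝ => (p.2.2 : ℂ) + h ((p.1 : ℂ) + (p.2.1 : ℂ) * Complex.I))
      ((fun p : ℝ × ℝ × ℝ => (p.1 : ℂ) + (p.2.1 : ℂ) * Complex.I) ⁻¹' Ω) := by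
    refine ContinuousOn.add (Continuous.continuousOn
      (Complex.continuous_ofReal.comp (continuous_snd.comp continuous_snd))) ?_
    exact hh.continuousOn.comp hζc.continuousOn (fun p hp => hp)
  have hUopen : IsOpen {p : ℝ × ℝ × ℝ | (p.1 + p.2.1 * Complex.I) ∈ Ω ∧
      (p.2.2 : ℂ) + h (p.1 + p.2.1 * Complex.I) ≠ 0} := by
    have h0 := hgc.isOpen_inter_preimage hU1 (isOpen_compl_singleton (x := (0 : ℂ)))
    convert h0 using 1
    rfl
  constructor
  · -- smoothness
    set U : Set (ℝ × ℝ × ℝ) := {p : ℝ × ℝ × ℝ | (p.1 + p.2.1 * Complex.I) ∈ Ω ∧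
      (p.2.2 : ℂ) + h (p.1 + p.2.1 * Complex.I) ≠ 0} with hUdef
    have hζsm : ContDiff ℝ (⊤ : ℕ∞) (fun p : ℝ × ℝ × ℝ => (p.1 : ℂ) + (p.2.1 : ℂ) * Complex.I) :=
      (Complex.ofRealCLM.contDiff.comp contDiff_fst).add
        ((Complex.ofRealCLM.contDiff.comp (contDiff_fst.comp contDiff_snd)).mul contDiff_const)
    have hnsq : ContDiff ℝ (⊤ : ℕ∞) Complex.normSq := by
      have hns : (Complex.normSq : ℂ → ℝ) = fun w => w.re * w.re + w.im * w.im :=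
        funext fun w => Complex.normSq_apply w
      rw [hns]
      exact (Complex.reCLM.contDiff.mul Complex.reCLM.contDiff).add
        (Complex.imCLM.contDiff.mul Complex.imCLM.contDiff)
    have hmaps : Set.MapsTo (fun p : ℝ × ℝ × ℝ => (p.1 : ℂ) + (p.2.1 : ℂ) * Complex.I) U Ω :=
      fun p hp => hp.1
    have hhsm : ContDiffOn ℝ (⊤ : ℕ∞) h Ω :=
      (hanh.restrictScalars (𝕜 := ℝ)).contDiffOn_of_completeSpace
    have hFsm : ContDiffOn ℝ (⊤ : ℕ∞) F Ω :=
      (hanF.restrictScalars (𝕜 := ℝ)).contDiffOn_of_completeSpace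
    have hF'sm : ContDiffOn ℝ (⊤ : ℕ∞) F' Ω :=
      (((hanF.deriv).restrictScalars (𝕜 := ℝ)).contDiffOn_of_completeSpace).congr
        (fun w hw => ((hF w hw).deriv).symm)
    have hh3 : ContDiffOn ℝ (⊤ : ℕ∞) (fun p : ℝ × ℝ × ℝ =>
        h ((p.1 : ℂ) + (p.2.1 : ℂ) * Complex.I)) U := hhsm.comp hζsm.contDiffOn hmaps
    have hF3 : ContDiffOn ℝ (⊤ : ℕ∞) (fun p : ℝ × ℝ × ℝ =>
        F ((p.1 : ℂ) + (p.2.1 : ℂ) * Complex.I)) U := hFsm.comp hζsm.contDiffOn hmaps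
    have hF'3 : ContDiffOn ℝ (⊤ : ℕ∞) (fun p : ℝ × ℝ × ℝ =>
        F' ((p.1 : ℂ) + (p.2.1 : ℂ) * Complex.I)) U := hF'sm.comp hζsm.contDiffOn hmaps
    have hz3 : ContDiff ℝ (⊤ : ℕ∞) (fun p : ℝ × ℝ × ℝ => (p.2.2 : ℂ)) :=
      Complex.ofRealCLM.contDiff.comp (contDiff_snd.comp contDiff_snd)
    have n1 : ContDiffOn ℝ (⊤ : ℕ∞) (fun p : ℝ × ℝ × ℝ =>
        Complex.normSq ((p.2.2 : ℂ) + h ((p.1 : ℂ) + (p.2.1 : ℂ) * Complex.I))) U :=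
      hnsq.comp_contDiffOn (hz3.contDiffOn.add hh3)
    have n2 : ContDiffOn ℝ (⊤ : ℕ∞) (fun p : ℝ × ℝ × ℝ =>
        Complex.normSq (F' ((p.1 : ℂ) + (p.2.1 : ℂ) * Complex.I))) U :=
      hnsq.comp_contDiffOn hF'3
    have n3 : ContDiffOn ℝ (⊤ : ℕ∞) (fun p : ℝ × ℝ × ℝ =>
        Complex.normSq (F ((p.1 : ℂ) + (p.2.1 : ℂ) * Complex.I))) U :=
      hnsq.comp_contDiffOn hF3
    have hNum : ContDiffOn ℝ (⊤ : ℕ∞) (fun p : ℝ × ℝ × ℝ =>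
        4 * a * Complex.normSq ((p.2.2 : ℂ) + h ((p.1 : ℂ) + (p.2.1 : ℂ) * Complex.I))
          * Complex.normSq (F' ((p.1 : ℂ) + (p.2.1 : ℂ) * Complex.I))) U :=
      (contDiffOn_const.mul n1).mul n2
    have hDen : ContDiffOn ℝ (⊤ : ℕ∞) (fun p : ℝ × ℝ × ℝ =>
        (1 + a * Complex.normSq (F ((p.1 : ℂ) + (p.2.1 : ℂ) * Complex.I)))^2) U :=
      (contDiffOn_const.add (contDiffOn_const.mul n3)).pow 2
    have hDpos : ∀ p ∈ U, (0:ℝ) <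
        (1 + a * Complex.normSq (F ((p.1 : ℂ) + (p.2.1 : ℂ) * Complex.I)))^2 := by
      intro p hp
      have := Complex.normSq_nonneg (F ((p.1 : ℂ) + (p.2.1 : ℂ) * Complex.I))
      positivity
    have hE : ContDiffOn ℝ (⊤ : ℕ∞) (fun p : ℝ × ℝ × ℝ =>
        4 * a * Complex.normSq ((p.2.2 : ℂ) + h ((p.1 : ℂ) + (p.2.1 : ℂ) * Complex.I))
          * Complex.normSq (F' ((p.1 : ℂ) + (p.2.1 : ℂ) * Complex.I))
          / (1 + a * Complex.normSq (F ((p.1 : ℂ) + (p.2.1 : ℂ) * Complex.I)))^2) U :=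
      hNum.div hDen (fun p hp => (hDpos p hp).ne')
    have hEpos : ∀ p ∈ U, (0:ℝ) <
        4 * a * Complex.normSq ((p.2.2 : ℂ) + h ((p.1 : ℂ) + (p.2.1 : ℂ) * Complex.I))
          * Complex.normSq (F' ((p.1 : ℂ) + (p.2.1 : ℂ) * Complex.I))
          / (1 + a * Complex.normSq (F ((p.1 : ℂ) + (p.2.1 : ℂ) * Complex.I)))^2 := by
      intro p hp
      have hb1 := Complex.normSq_pos.2 hp.2
      have hb2 := Complex.normSq_pos.2 (hF' _ hp.1)
      exact div_pos (mul_pos (mul_pos (by linarith) hb1) hb2) (hDpos p hp)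
    refine (hE.log (fun p hp => (hEpos p hp).ne')).congr ?_
    intro p hp
    rw [hu p.1 p.2.1 p.2.2, Complex.sq_norm, Complex.sq_norm]
  · -- the Toda equation
    intro x y z hζΩ hz
    -- membership of the base point in each coordinate-line open set
    set U : Set (ℝ × ℝ × ℝ) := {p : ℝ × ℝ × ℝ | (p.1 + p.2.1 * Complex.I) ∈ Ω ∧
      (p.2.2 : ℂ) + h (p.1 + p.2.1 * Complex.I) ≠ 0} with hUdef
    have hVx : IsOpen ((fun t : ℝ => (t, y, z)) ⁻¹' U) :=
      hUopen.preimage (continuous_id.prodMk continuous_const)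
    have hVy : IsOpen ((fun t : ℝ => (x, t, z)) ⁻¹' U) :=
      hUopen.preimage (continuous_const.prodMk (continuous_id.prodMk continuous_const))
    have hVz : IsOpen ((fun t : ℝ => (x, y, t)) ⁻¹' U) :=
      hUopen.preimage (continuous_const.prodMk (continuous_const.prodMk continuous_id))
    have hxV : x ∈ (fun t : ℝ => (t, y, z)) ⁻¹' U := ⟨hζΩ, hz⟩
    have hyV : y ∈ (fun t : ℝ => (x, t, z)) ⁻¹' U := ⟨hζΩ, hz⟩
    have hzV : z ∈ (fun t : ℝ => (x, y, t)) ⁻¹' U := ⟨hζΩ, hz⟩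
    -- x-line Laplacian piece
    have keyx := line_lap ha hdh hdh2 hF hdF' hdF'' hF'
      (L := fun t : ℝ => (t : ℂ) + (y : ℂ) * Complex.I) (fun s => hasDerivAt_lineX y s)
      hVx hxV (fun t ht => ⟨ht.1, ht.2⟩) (f := fun s => u s y z) (fun t => hu t y z)
    have keyy := line_lap ha hdh hdh2 hF hdF' hdF'' hF'
      (L := fun t : ℝ => (x : ℂ) + (t : ℂ) * Complex.I) (fun s => hasDerivAt_lineY x s)
      hVy hyV (fun t ht => ⟨ht.1, ht.2⟩) (f := fun s => u x s z) (fun t => hu x t z)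
    -- z-line: second derivative of e^u
    have hb2 : (0:ℝ) < Complex.normSq (F' ((x:ℂ) + (y:ℂ) * Complex.I)) :=
      Complex.normSq_pos.2 (hF' _ hζΩ)
    have hb3 : (0:ℝ) < 1 + a * Complex.normSq (F ((x:ℂ) + (y:ℂ) * Complex.I)) := by
      have := Complex.normSq_nonneg (F ((x:ℂ) + (y:ℂ) * Complex.I)); positivity
    set ψ : ℝ → ℝ := fun t => 4 * a * Complex.normSq ((t:ℂ) + h ((x:ℂ) + (y:ℂ) * Complex.I))
        * Complex.normSq (F' ((x:ℂ) + (y:ℂ) * Complex.I))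
        / (1 + a * Complex.normSq (F ((x:ℂ) + (y:ℂ) * Complex.I)))^2 with hψ
    have hvalz : ∀ t ∈ (fun t : ℝ => (x, y, t)) ⁻¹' U, Real.exp (u x y t) = ψ t := by
      intro t ht
      have hb1 : (0:ℝ) < Complex.normSq ((t:ℂ) + h ((x:ℂ) + (y:ℂ) * Complex.I)) :=
        Complex.normSq_pos.2 ht.2
      rw [hu, Complex.sq_norm, Complex.sq_norm, hψ]
      exact Real.exp_log (div_pos (mul_pos (mul_pos (by linarith) hb1) hb2) (pow_pos hb3 2))
    have hcz : ∀ t : ℝ, HasDerivAt (fun s : ℝ => (s:ℂ) + h ((x:ℂ) + (y:ℂ) * Complex.I)) 1 t := by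
      intro t
      simpa using (Complex.ofRealCLM.hasDerivAt (x := t)).add_const (h ((x:ℂ) + (y:ℂ) * Complex.I))
    set dz : ℝ → ℝ := fun t => 4 * a *
        (2 * ((starRingEnd ℂ) ((t:ℂ) + h ((x:ℂ) + (y:ℂ) * Complex.I)) * 1).re)
        * Complex.normSq (F' ((x:ℂ) + (y:ℂ) * Complex.I))
        / (1 + a * Complex.normSq (F ((x:ℂ) + (y:ℂ) * Complex.I)))^2 with hdz
    have hψD : ∀ t : ℝ, HasDerivAt ψ (dz t) t := by
      intro t
      exact (((hasDerivAt_normSq_comp (hcz t)).const_mul (4*a)).mul_const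
        (Complex.normSq (F' ((x:ℂ) + (y:ℂ) * Complex.I)))).div_const
        ((1 + a * Complex.normSq (F ((x:ℂ) + (y:ℂ) * Complex.I)))^2)
    have hpdzval : ∀ t ∈ (fun t : ℝ => (x, y, t)) ⁻¹' U,
        deriv (fun s => Real.exp (u x y s)) t = dz t := by
      intro t ht
      have hev : (fun s => Real.exp (u x y s)) =ᶠ[nhds t] ψ :=
        Filter.eventuallyEq_of_mem (hVz.mem_nhds ht) hvalz
      rw [Filter.EventuallyEq.deriv_eq hev]
      exact (hψD t).deriv
    have hqz : HasDerivAt dz (4 * a * (2 * ((starRingEnd ℂ) (1:ℂ) * 1).re)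
        * Complex.normSq (F' ((x:ℂ) + (y:ℂ) * Complex.I))
        / (1 + a * Complex.normSq (F ((x:ℂ) + (y:ℂ) * Complex.I)))^2) z := by
      exact ((((hasDerivAt_re_comp ((hasDerivAt_conj_comp (hcz z)).mul_const 1)).const_mul
        2).const_mul (4*a)).mul_const _).div_const _
    have keyz : deriv (fun t => deriv (fun s => Real.exp (u x y s)) t) z
        = 8 * a * Complex.normSq (F' ((x:ℂ) + (y:ℂ) * Complex.I))
          / (1 + a * Complex.normSq (F ((x:ℂ) + (y:ℂ) * Complex.I)))^2 := by
      have hev2 : (fun t => deriv (fun s => Real.exp (u x y s)) t) =ᶠ[nhds z] dz :=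
        Filter.eventuallyEq_of_mem (hVz.mem_nhds hzV) hpdzval
      rw [Filter.EventuallyEq.deriv_eq hev2, hqz.deriv]
      simp only [map_one, one_mul, Complex.one_re, mul_one]
      ring
    -- assemble
    simp only [pdx, pdy, pdz]
    rw [keyx, keyy, keyz]
    have e1 := lap_sum 0 1 ((z:ℂ) + h ((x:ℂ) + (y:ℂ) * Complex.I))
      (deriv h ((x:ℂ) + (y:ℂ) * Complex.I)) (deriv (deriv h) ((x:ℂ) + (y:ℂ) * Complex.I))
      (0 + 1 * Complex.normSq ((z:ℂ) + h ((x:ℂ) + (y:ℂ) * Complex.I))) rfl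
    have e2 := lap_sum 0 1 (F' ((x:ℂ) + (y:ℂ) * Complex.I))
      (deriv (deriv F) ((x:ℂ) + (y:ℂ) * Complex.I))
      (deriv (deriv (deriv F)) ((x:ℂ) + (y:ℂ) * Complex.I))
      (0 + 1 * Complex.normSq (F' ((x:ℂ) + (y:ℂ) * Complex.I))) rfl
    have e3 := lap_sum 1 a (F ((x:ℂ) + (y:ℂ) * Complex.I))
      (F' ((x:ℂ) + (y:ℂ) * Complex.I)) (deriv (deriv F) ((x:ℂ) + (y:ℂ) * Complex.I))
      (1 + a * Complex.normSq (F ((x:ℂ) + (y:ℂ) * Complex.I))) rfl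
    have hb3' : (1 + a * Complex.normSq (F ((x:ℂ) + (y:ℂ) * Complex.I)))^2 ≠ 0 :=
      pow_ne_zero 2 hb3.ne'
    linear_combination e1 + e2 - 2 * e3
end

section
/- Let a > 0 be real, Ω ⊆ ℂ open, h, F holomorphic on Ω with F′ nonvanishing, and let u(x,y,z) = log( 4a·(z+h)(z+h̄)·|F′|² / (1 + a|F|²)² ) on U = {(x,y,z) : x+iy ∈ Ω, z + h(x+iy) ≠ 0}. Then the smooth function κ(x,y,z) = i(h − h̄) / ( 2(z+h)(z+h̄) ) (h evaluated at x+iy) satisfies on U the three equations: κ_x = −(1/2)·u_{yz}, κ_y = (1/2)·u_{xz}, and κ_z + u_z·κ = 0. -/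
/-!
Writing `w = z + h(x + iy)`, the Toda solution splits as `u = log |w|² + G(x, y)` with `G`
independent of `z`, and `κ = Im (1 / w)`. Hence `u_z = 2 Re (1 / w)`, and since `h` is
holomorphic, `∂_x` and `∂_y` act on functions of `w` as `h'` and `i h'`. With `p = 1 / w` all
three equations become polynomial identities in `p`, `h'` and `i`.
-/

open Complex ComplexConjugate Filter Topology

section CurvesInComplexPlane

variable {g : ℝ → ℂ} {g' : ℂ} {s : ℝ}

theorem HasDerivAt.complex_re (hg : HasDerivAt g g' s) :
    HasDerivAt (fun s => (g s).re) g'.re s :=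
  reCLM.hasFDerivAt.comp_hasDerivAt s hg

theorem HasDerivAt.complex_im (hg : HasDerivAt g g' s) :
    HasDerivAt (fun s => (g s).im) g'.im s :=
  imCLM.hasFDerivAt.comp_hasDerivAt s hg

theorem HasDerivAt.log_normSq (hg : HasDerivAt g g' s) (h0 : g s ≠ 0) :
    HasDerivAt (fun s => Real.log (normSq (g s))) (2 * (g' / g s).re) s := by
  simp_rw [normSq_eq_norm_sq]
  convert hg.norm_sq.log (by simpa [normSq_eq_norm_sq] using h0) using 1
  rw [div_re, Complex.inner, ← normSq_eq_norm_sq]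
  simp only [mul_re, conj_re, conj_im, mul_neg, sub_neg_eq_add]
  ring

theorem hasDerivAt_ofReal_add (w : ℂ) (z : ℝ) : HasDerivAt (fun t : ℝ => (t : ℂ) + w) 1 z :=
  (hasDerivAt_id z).ofReal_comp.add_const w

theorem hasDerivAt_add_ofReal_mul_I (w : ℂ) (y : ℝ) :
    HasDerivAt (fun s : ℝ => w + s * I) I y := by
  simpa using ((hasDerivAt_id y).ofReal_comp.mul_const I).const_add w

end CurvesInComplexPlane

theorem DifferentiableOn.of_forall_hasDerivAt {E : Type*} [NormedAddCommGroup E]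
    [NormedSpace ℂ E] [CompleteSpace E] {f f' : ℂ → E} {Ω : Set ℂ} (hΩ : IsOpen Ω)
    (hf : ∀ ζ ∈ Ω, HasDerivAt f (f' ζ) ζ) : DifferentiableOn ℂ f' Ω := by
  have hfd : DifferentiableOn ℂ f Ω := fun ζ hζ =>
    (hf ζ hζ).differentiableAt.differentiableWithinAt
  exact (hfd.deriv hΩ).congr fun ζ hζ => (hf ζ hζ).deriv.symm

theorem re_I_mul_sub_conj_div (z : ℝ) (w : ℂ) :
    (I * (w - conj w) / (2 * ((z + w) * (z + conj w)))).re = ((z + w)⁻¹).im := by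
  have hconj : (z : ℂ) + conj w = conj (z + w) := by simp
  have hnum : I * (((2 * w.im : ℝ) : ℂ) * I) = 2 * ((-w.im : ℝ) : ℂ) := by
    push_cast
    linear_combination (2 * (w.im : ℂ)) * I_sq
  rw [hconj, mul_conj, sub_conj, inv_im, add_im, ofReal_im, zero_add, hnum,
    mul_div_mul_left _ _ two_ne_zero, ← ofReal_div, ofReal_re, neg_div]

section TodaSolution

variable {a : ℝ} {h F F' : ℂ → ℂ} {ζ : ℂ}

/-- The logarithm of the pull-back by `F` of the spherical metric `4a |dw|² / (1 + a |w|²)²`. -/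
noncomputable def logSphericalDensity (a : ℝ) (F F' : ℂ → ℂ) (ζ : ℂ) : ℝ :=
  Real.log (4 * a * ‖F' ζ‖ ^ 2 / (1 + a * ‖F ζ‖ ^ 2) ^ 2)

noncomputable def todaSolution (a : ℝ) (h F F' : ℂ → ℂ) (ζ : ℂ) (z : ℝ) : ℝ :=
  Real.log (4 * a * normSq (z + h ζ) * ‖F' ζ‖ ^ 2 / (1 + a * ‖F ζ‖ ^ 2) ^ 2)

theorem sphericalDensity_pos (ha : 0 < a) (hF' : F' ζ ≠ 0) :
    0 < 4 * a * ‖F' ζ‖ ^ 2 / (1 + a * ‖F ζ‖ ^ 2) ^ 2 := by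
  have : 0 < ‖F' ζ‖ := norm_pos_iff.mpr hF'
  positivity

theorem todaSolution_eq {z : ℝ} (ha : 0 < a) (hF' : F' ζ ≠ 0) (hz : (z : ℂ) + h ζ ≠ 0) :
    todaSolution a h F F' ζ z = Real.log (normSq (z + h ζ)) + logSphericalDensity a F F' ζ := by
  rw [todaSolution, logSphericalDensity,
    ← Real.log_mul (normSq_pos.mpr hz).ne' (sphericalDensity_pos ha hF').ne']
  ring_nf

theorem differentiableAt_logSphericalDensity (ha : 0 < a) (hF : DifferentiableAt ℝ F ζ)
    (hF'd : DifferentiableAt ℝ F' ζ) (hF' : F' ζ ≠ 0) :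
    DifferentiableAt ℝ (logSphericalDensity a F F') ζ := by
  have hF'sq := hF'd.norm_sq ℝ
  have hFsq := hF.norm_sq ℝ
  have hquot : DifferentiableAt ℝ
      (fun ξ => 4 * a * ‖F' ξ‖ ^ 2 / (1 + a * ‖F ξ‖ ^ 2) ^ 2) ζ := by
    fun_prop (disch := positivity)
  exact hquot.log (sphericalDensity_pos ha hF').ne'

theorem hasDerivAt_todaSolution (ha : 0 < a) (hF' : F' ζ ≠ 0) {z : ℝ}
    (hz : (z : ℂ) + h ζ ≠ 0) :
    HasDerivAt (todaSolution a h F F' ζ) (2 * (1 / (z + h ζ)).re) z := by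
  have hline := hasDerivAt_ofReal_add (h ζ) z
  have hsplit : ∀ᶠ t in 𝓝 z, todaSolution a h F F' ζ t =
      Real.log (normSq (t + h ζ)) + logSphericalDensity a F F' ζ := by
    filter_upwards [hline.continuousAt.eventually_ne hz] with t ht
    exact todaSolution_eq ha hF' ht
  exact ((hline.log_normSq hz).add_const _).congr_of_eventuallyEq hsplit

theorem hasDerivAt_todaSolution_comp {γ : ℝ → ℂ} {v h' : ℂ} {s t : ℝ} (ha : 0 < a)
    (hγ : HasDerivAt γ v s) (hh : HasDerivAt h h' (γ s))
    (hG : DifferentiableAt ℝ (logSphericalDensity a F F') (γ s))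
    (hF' : ∀ᶠ ξ in 𝓝 (γ s), F' ξ ≠ 0) (ht : (t : ℂ) + h (γ s) ≠ 0) :
    HasDerivAt (fun s => todaSolution a h F F' (γ s) t)
      (2 * (h' * v / (t + h (γ s))).re + fderiv ℝ (logSphericalDensity a F F') (γ s) v) s := by
  have hhγ : HasDerivAt (fun s => (t : ℂ) + h (γ s)) (h' * v) s := (hh.comp s hγ).const_add _
  have hsplit : ∀ᶠ ξ in 𝓝 (γ s), todaSolution a h F F' ξ t =
      Real.log (normSq (t + h ξ)) + logSphericalDensity a F F' ξ := by
    filter_upwards [hF', (continuousAt_const.add hh.continuousAt).eventually_ne ht] with ξ hξ hξt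
    exact todaSolution_eq ha hξ hξt
  refine HasDerivAt.congr_of_eventuallyEq ?_ (hγ.continuousAt.eventually hsplit)
  exact (hhγ.log_normSq ht).add (hG.hasFDerivAt.comp_hasDerivAt s hγ)

theorem deriv_deriv_todaSolution_comp {γ : ℝ → ℂ} {v h' : ℂ} {s z : ℝ} (ha : 0 < a)
    (hγ : HasDerivAt γ v s) (hh : HasDerivAt h h' (γ s))
    (hG : DifferentiableAt ℝ (logSphericalDensity a F F') (γ s))
    (hF' : ∀ᶠ ξ in 𝓝 (γ s), F' ξ ≠ 0) (hz : (z : ℂ) + h (γ s) ≠ 0) :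
    deriv (fun t => deriv (fun s => todaSolution a h F F' (γ s) t) s) z =
      2 * (-(h' * v / (z + h (γ s)) ^ 2)).re := by
  have hline := hasDerivAt_ofReal_add (h (γ s)) z
  have hinner : (fun t => deriv (fun s => todaSolution a h F F' (γ s) t) s) =ᶠ[𝓝 z] fun t =>
      2 * (h' * v / (t + h (γ s))).re + fderiv ℝ (logSphericalDensity a F F') (γ s) v := by
    filter_upwards [hline.continuousAt.eventually_ne hz] with t ht
    exact (hasDerivAt_todaSolution_comp ha hγ hh hG hF' ht).deriv
  have hquot := ((hasDerivAt_const z (h' * v)).div hline hz).complex_re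
  rw [hinner.deriv_eq]
  refine ((hquot.const_mul 2).add_const _).deriv.trans ?_
  congr 2
  ring

theorem hasDerivAt_im_inv_ofReal_add_comp {γ : ℝ → ℂ} {v h' : ℂ} {s z : ℝ}
    (hγ : HasDerivAt γ v s) (hh : HasDerivAt h h' (γ s)) (hz : (z : ℂ) + h (γ s) ≠ 0) :
    HasDerivAt (fun s => (((z : ℂ) + h (γ s))⁻¹).im) (-(h' * v) / (z + h (γ s)) ^ 2).im s :=
  (((hh.comp s hγ).const_add (z : ℂ)).fun_inv hz).complex_im

end TodaSolution

/-- for the explicit Toda solution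
`u(x,y,z) = log( 4a·(z+h)(z+h̄)·|F′|² / (1 + a|F|²)² )`, the function
`κ = i(h − h̄)/(2(z+h)(z+h̄))` (a real-valued function, expressed as the real part of the
corresponding complex expression) satisfies the hyperCR monopole equations
`κ_x = −(1/2)u_{yz}`, `κ_y = (1/2)u_{xz}`, `κ_z + u_z·κ = 0` on
`U = {(x,y,z) : x+iy ∈ Ω, z + h(x+iy) ≠ 0}`. -/
theorem hyperCR_monopole_equations_for_toda_solution
    (a : ℝ) (ha : 0 < a)
    (Ω : Set ℂ) (hΩ : IsOpen Ω)
    (h F F' : ℂ → ℂ)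
    (hh : DifferentiableOn ℂ h Ω)
    (hF : ∀ ζ ∈ Ω, HasDerivAt F (F' ζ) ζ)
    (hF' : ∀ ζ ∈ Ω, F' ζ ≠ 0)
    (u : ℝ → ℝ → ℝ → ℝ)
    (hu : ∀ x y z : ℝ,
      u x y z = Real.log (4 * a * Complex.normSq ((z : ℂ) + h (x + y * Complex.I)) *
        ‖F' (x + y * Complex.I)‖^2 /
        (1 + a * ‖F (x + y * Complex.I)‖^2)^2))
    (κ : ℝ → ℝ → ℝ → ℝ)
    (hκ : ∀ x y z : ℝ,
      κ x y z = (Complex.I * (h (x + y * Complex.I) - (starRingEnd ℂ) (h (x + y * Complex.I))) /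
        (2 * (((z : ℂ) + h (x + y * Complex.I)) *
          ((z : ℂ) + (starRingEnd ℂ) (h (x + y * Complex.I)))))).re) :
    ∀ x y z : ℝ, (x + y * Complex.I) ∈ Ω → (z : ℂ) + h (x + y * Complex.I) ≠ 0 →
      pdx κ x y z = -(1/2) * pdz (pdy u) x y z ∧
      pdy κ x y z = (1/2) * pdz (pdx u) x y z ∧
      pdz κ x y z + pdz u x y z * κ x y z = 0 := by
  intro x y z hζ hz
  obtain rfl : u = fun x y z : ℝ => todaSolution a h F F' (x + y * I) z := funext₃ hu
  obtain rfl : κ = fun x y z : ℝ => (((z : ℂ) + h (x + y * I))⁻¹).im := by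
    funext x y z
    rw [hκ, re_I_mul_sub_conj_div]
  have hnhds : Ω ∈ 𝓝 ((x : ℂ) + y * I) := hΩ.mem_nhds hζ
  have hhζ := (hh.differentiableAt hnhds).hasDerivAt
  have hG := differentiableAt_logSphericalDensity ha
    ((hF _ hζ).differentiableAt.restrictScalars ℝ)
    (((DifferentiableOn.of_forall_hasDerivAt hΩ hF).differentiableAt hnhds).restrictScalars ℝ)
    (hF' _ hζ)
  have hF'ζ : ∀ᶠ ξ in 𝓝 ((x : ℂ) + y * I), F' ξ ≠ 0 := eventually_of_mem hnhds hF'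
  have hux := deriv_deriv_todaSolution_comp ha (hasDerivAt_ofReal_add (y * I) x) hhζ hG hF'ζ hz
  have huy := deriv_deriv_todaSolution_comp ha (hasDerivAt_add_ofReal_mul_I x y) hhζ hG hF'ζ hz
  have huz := hasDerivAt_todaSolution (F := F) ha (hF' _ hζ) hz
  have hκx := hasDerivAt_im_inv_ofReal_add_comp (hasDerivAt_ofReal_add (y * I) x) hhζ hz
  have hκy := hasDerivAt_im_inv_ofReal_add_comp (hasDerivAt_add_ofReal_mul_I x y) hhζ hz
  have hκz := ((hasDerivAt_ofReal_add (h (x + y * I)) z).fun_inv hz).complex_im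
  simp only [pdx, pdy, pdz]
  refine ⟨?_, ?_, ?_⟩ <;>
  simp only [hκx.deriv, hκy.deriv, hκz.deriv, huz.deriv, hux, huy, div_eq_mul_inv, one_mul,
    ← inv_pow] <;>
  generalize ((z : ℂ) + h (x + y * I))⁻¹ = p <;>
  simp only [mul_re, mul_im, neg_re, neg_im, pow_two, I_re, I_im, one_re, one_im] <;>
  ring
end

section
/- Let Ω ⊆ ℝ² be open, I ⊆ ℝ a nonempty open interval, a ≠ 0 a real constant, and f, b, c smooth real-valued functions on Ω such that a·z² + b(x,y)·z + c(x,y) > 0 for all (x,y,z) ∈ Ω × I. Define u(x,y,z) = f(x,y) + log( a·z² + b·z + c ). Then u satisfies the SU(∞) Toda field equation u_xx + u_yy + (e^u)_zz = 0 on Ω × I if and only if the following five equations hold at every point of Ω: (i) f_xx + f_yy + 2a·e^f = 0; (ii) a(b_xx + b_yy) = 0; (iii) a(c_xx + c_yy) + b(b_xx + b_yy) = b_x² + b_y²; (iv) b(c_xx + c_yy) + c(b_xx + b_yy) = 2(b_x c_x + b_y c_y); (v) c(c_xx + c_yy) = c_x² + c_y². -/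
open Real Filter Polynomial

/-- Partial derivative in the first variable of a function of two real variables. -/
noncomputable def pdx2 (f : ℝ → ℝ → ℝ) : ℝ → ℝ → ℝ :=
  fun x y => deriv (fun t => f t y) x

/-- Partial derivative in the second variable of a function of two real variables. -/
noncomputable def pdy2 (f : ℝ → ℝ → ℝ) : ℝ → ℝ → ℝ :=
  fun x y => deriv (fun t => f x t) y

/-- Auxiliary: partial derivatives of a smooth function of two variables exist. -/
lemma toda_aux_master {Ω : Set (ℝ × ℝ)} (hΩ : IsOpen Ω) {g : ℝ → ℝ → ℝ}
    (hg : ContDiffOn ℝ (⊤ : ℕ∞) (fun p : ℝ × ℝ => g p.1 p.2) Ω) :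
    ∃ g1 g2 : ℝ → ℝ → ℝ,
      ContDiffOn ℝ (⊤ : ℕ∞) (fun p : ℝ × ℝ => g1 p.1 p.2) Ω ∧
      ContDiffOn ℝ (⊤ : ℕ∞) (fun p : ℝ × ℝ => g2 p.1 p.2) Ω ∧
      (∀ x y, (x, y) ∈ Ω → HasDerivAt (fun t => g t y) (g1 x y) x) ∧
      (∀ x y, (x, y) ∈ Ω → HasDerivAt (fun t => g x t) (g2 x y) y) := by
  set G : ℝ × ℝ → ℝ := fun p => g p.1 p.2 with hG
  have hfd : ContDiffOn ℝ (⊤ : ℕ∞) (fun p => fderiv ℝ G p) Ω := hg.fderiv_of_isOpen hΩ (by simp)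
  refine ⟨fun x y => fderiv ℝ G (x, y) (1, 0), fun x y => fderiv ℝ G (x, y) (0, 1), ?_, ?_, ?_, ?_⟩
  · exact ((ContinuousLinearMap.apply ℝ ℝ ((1:ℝ), (0:ℝ))).contDiff.comp_contDiffOn hfd)
  · exact ((ContinuousLinearMap.apply ℝ ℝ ((0:ℝ), (1:ℝ))).contDiff.comp_contDiffOn hfd)
  · intro x y hxy
    have hG' : DifferentiableAt ℝ G (x, y) :=
      (hg.contDiffAt (hΩ.mem_nhds hxy)).differentiableAt (by simp)
    have hline : HasDerivAt (fun t : ℝ => ((t : ℝ), y)) ((1 : ℝ), (0 : ℝ)) x :=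
      (hasDerivAt_id x).prodMk (hasDerivAt_const x y)
    exact hG'.hasFDerivAt.comp_hasDerivAt x hline
  · intro x y hxy
    have hG' : DifferentiableAt ℝ G (x, y) :=
      (hg.contDiffAt (hΩ.mem_nhds hxy)).differentiableAt (by simp)
    have hline : HasDerivAt (fun t : ℝ => ((x : ℝ), t)) ((0 : ℝ), (1 : ℝ)) y :=
      (hasDerivAt_const y x).prodMk (hasDerivAt_id y)
    exact hG'.hasFDerivAt.comp_hasDerivAt y hline

lemma toda_aux_pdx2_pdx2 {Ω : Set (ℝ × ℝ)} (hΩ : IsOpen Ω) {g g1 g11 : ℝ → ℝ → ℝ}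
    (h1 : ∀ x y, (x, y) ∈ Ω → HasDerivAt (fun t => g t y) (g1 x y) x)
    (h11 : ∀ x y, (x, y) ∈ Ω → HasDerivAt (fun t => g1 t y) (g11 x y) x)
    {x y : ℝ} (hxy : (x, y) ∈ Ω) : pdx2 (pdx2 g) x y = g11 x y := by
  have hnb : ∀ᶠ t in nhds x, (t, y) ∈ Ω :=
    (continuous_id.prodMk continuous_const).continuousAt.preimage_mem_nhds (hΩ.mem_nhds hxy)
  have hev : (fun t => pdx2 g t y) =ᶠ[nhds x] (fun t => g1 t y) := by
    filter_upwards [hnb] with t ht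
    exact (h1 t y ht).deriv
  have : pdx2 (pdx2 g) x y = deriv (fun t => g1 t y) x := hev.deriv_eq
  rw [this, (h11 x y hxy).deriv]

lemma toda_aux_pdy2_pdy2 {Ω : Set (ℝ × ℝ)} (hΩ : IsOpen Ω) {g g2 g22 : ℝ → ℝ → ℝ}
    (h2 : ∀ x y, (x, y) ∈ Ω → HasDerivAt (fun t => g x t) (g2 x y) y)
    (h22 : ∀ x y, (x, y) ∈ Ω → HasDerivAt (fun t => g2 x t) (g22 x y) y)
    {x y : ℝ} (hxy : (x, y) ∈ Ω) : pdy2 (pdy2 g) x y = g22 x y := by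
  have hnb : ∀ᶠ t in nhds y, (x, t) ∈ Ω :=
    (continuous_const.prodMk continuous_id).continuousAt.preimage_mem_nhds (hΩ.mem_nhds hxy)
  have hev : (fun t => pdy2 g x t) =ᶠ[nhds y] (fun t => g2 x t) := by
    filter_upwards [hnb] with t ht
    exact (h2 x t ht).deriv
  have : pdy2 (pdy2 g) x y = deriv (fun t => g2 x t) y := hev.deriv_eq
  rw [this, (h22 x y hxy).deriv]

lemma toda_aux_pdzz {I : Set ℝ} (hIopen : IsOpen I) {u : ℝ → ℝ → ℝ → ℝ}
    {f b c : ℝ → ℝ → ℝ} {a x y : ℝ}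
    (hu : ∀ z : ℝ, u x y z = f x y + Real.log (a * z^2 + b x y * z + c x y))
    (hQ : ∀ z ∈ I, 0 < a * z^2 + b x y * z + c x y)
    {z : ℝ} (hz : z ∈ I) :
    pdz (pdz (fun x' y' z' => Real.exp (u x' y' z'))) x y z = 2 * a * Real.exp (f x y) := by
  have step1 : ∀ w ∈ I, pdz (fun x' y' z' => Real.exp (u x' y' z')) x y w
      = Real.exp (f x y) * (2 * a * w + b x y) := by
    intro w hw
    have hev : (fun s => Real.exp (u x y s)) =ᶠ[nhds w]
        (fun s => Real.exp (f x y) * (a * s^2 + b x y * s + c x y)) := by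
      filter_upwards [hIopen.mem_nhds hw] with s hs
      rw [hu s, Real.exp_add, Real.exp_log (hQ s hs)]
    have hq : HasDerivAt (fun s => a * s^2 + b x y * s + c x y) (2 * a * w + b x y) w := by
      have h1 : HasDerivAt (fun s : ℝ => a * s^2) (a * (2 * w^1)) w :=
        (hasDerivAt_pow 2 w).const_mul a
      have h2 : HasDerivAt (fun s : ℝ => b x y * s) (b x y * 1) w :=
        (hasDerivAt_id w).const_mul (b x y)
      have := (h1.add h2).add_const (c x y)
      exact this.congr_deriv (by ring)
    have hd : HasDerivAt (fun s => Real.exp (f x y) * (a * s^2 + b x y * s + c x y))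
        (Real.exp (f x y) * (2 * a * w + b x y)) w := hq.const_mul _
    show deriv (fun s => Real.exp (u x y s)) w = _
    rw [hev.deriv_eq, hd.deriv]
  have hev2 : (fun w => pdz (fun x' y' z' => Real.exp (u x' y' z')) x y w) =ᶠ[nhds z]
      (fun w => Real.exp (f x y) * (2 * a * w + b x y)) := by
    filter_upwards [hIopen.mem_nhds hz] with w hw using step1 w hw
  have hd2 : HasDerivAt (fun w => Real.exp (f x y) * (2 * a * w + b x y))
      (Real.exp (f x y) * (2 * a)) z := by
    have : HasDerivAt (fun w : ℝ => 2 * a * w + b x y) (2 * a) z := by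
      simpa using ((hasDerivAt_id z).const_mul (2 * a)).add_const (b x y)
    exact this.const_mul _
  show deriv _ z = _
  rw [hev2.deriv_eq, hd2.deriv]
  ring

lemma toda_aux_pdxx {Ω : Set (ℝ × ℝ)} (hΩ : IsOpen Ω) {I : Set ℝ}
    {u : ℝ → ℝ → ℝ → ℝ} {f b c f1 f11 b1 b11 c1 c11 : ℝ → ℝ → ℝ} {a : ℝ}
    (hu : ∀ x y z : ℝ, u x y z = f x y + Real.log (a * z^2 + b x y * z + c x y))
    (hpos : ∀ x y z : ℝ, (x, y) ∈ Ω → z ∈ I → 0 < a * z^2 + b x y * z + c x y)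
    (hf1 : ∀ x y, (x, y) ∈ Ω → HasDerivAt (fun t => f t y) (f1 x y) x)
    (hf11 : ∀ x y, (x, y) ∈ Ω → HasDerivAt (fun t => f1 t y) (f11 x y) x)
    (hb1 : ∀ x y, (x, y) ∈ Ω → HasDerivAt (fun t => b t y) (b1 x y) x)
    (hb11 : ∀ x y, (x, y) ∈ Ω → HasDerivAt (fun t => b1 t y) (b11 x y) x)
    (hc1 : ∀ x y, (x, y) ∈ Ω → HasDerivAt (fun t => c t y) (c1 x y) x)
    (hc11 : ∀ x y, (x, y) ∈ Ω → HasDerivAt (fun t => c1 t y) (c11 x y) x)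
    {x y z : ℝ} (hxy : (x, y) ∈ Ω) (hz : z ∈ I) :
    pdx (pdx u) x y z = f11 x y +
      ((b11 x y * z + c11 x y) * (a * z^2 + b x y * z + c x y)
        - (b1 x y * z + c1 x y)^2) / (a * z^2 + b x y * z + c x y)^2 := by
  have step1 : ∀ t y' : ℝ, (t, y') ∈ Ω → pdx u t y' z
      = f1 t y' + (b1 t y' * z + c1 t y') / (a * z^2 + b t y' * z + c t y') := by
    intro t y' ht
    have hQ : HasDerivAt (fun s => a * z^2 + b s y' * z + c s y')
        (b1 t y' * z + c1 t y') t := by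
      have h := (((hb1 t y' ht).mul_const z).add (hc1 t y' ht)).const_add (a * z^2)
      have e : (fun s => a * z^2 + b s y' * z + c s y')
          = fun s => a * z^2 + (b s y' * z + c s y') := by funext s; ring
      rw [e]; exact h
    have hQne : a * z^2 + b t y' * z + c t y' ≠ 0 := (hpos t y' z ht hz).ne'
    have hd : HasDerivAt (fun s => u s y' z)
        (f1 t y' + (b1 t y' * z + c1 t y') / (a * z^2 + b t y' * z + c t y')) t := by
      have heq : (fun s => u s y' z)
          = fun s => f s y' + Real.log (a * z^2 + b s y' * z + c s y') := by
        funext s; rw [hu]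
      rw [heq]
      exact (hf1 t y' ht).add (hQ.log hQne)
    exact hd.deriv
  have hnb : ∀ᶠ t in nhds x, (t, y) ∈ Ω :=
    (continuous_id.prodMk continuous_const).continuousAt.preimage_mem_nhds (hΩ.mem_nhds hxy)
  have hev : (fun t => pdx u t y z) =ᶠ[nhds x]
      (fun t => f1 t y + (b1 t y * z + c1 t y) / (a * z^2 + b t y * z + c t y)) := by
    filter_upwards [hnb] with t ht using step1 t y ht
  have hQne : a * z^2 + b x y * z + c x y ≠ 0 := (hpos x y z hxy hz).ne'
  have hnum : HasDerivAt (fun t => b1 t y * z + c1 t y) (b11 x y * z + c11 x y) x :=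
    ((hb11 x y hxy).mul_const z).add (hc11 x y hxy)
  have hden : HasDerivAt (fun t => a * z^2 + b t y * z + c t y) (b1 x y * z + c1 x y) x := by
    have h := (((hb1 x y hxy).mul_const z).add (hc1 x y hxy)).const_add (a * z^2)
    have e : (fun t => a * z^2 + b t y * z + c t y)
        = fun t => a * z^2 + (b t y * z + c t y) := by funext t; ring
    rw [e]; exact h
  have hdiv := hnum.div hden hQne
  have hd2 := (hf11 x y hxy).add hdiv
  show deriv (fun t => pdx u t y z) x = _
  rw [hev.deriv_eq, HasDerivAt.deriv (f := fun t => f1 t y + (b1 t y * z + c1 t y) / (a * z^2 + b t y * z + c t y)) hd2]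
  congr 1
  field_simp

lemma toda_aux_pdyy {Ω : Set (ℝ × ℝ)} (hΩ : IsOpen Ω) {I : Set ℝ}
    {u : ℝ → ℝ → ℝ → ℝ} {f b c f2 f22 b2 b22 c2 c22 : ℝ → ℝ → ℝ} {a : ℝ}
    (hu : ∀ x y z : ℝ, u x y z = f x y + Real.log (a * z^2 + b x y * z + c x y))
    (hpos : ∀ x y z : ℝ, (x, y) ∈ Ω → z ∈ I → 0 < a * z^2 + b x y * z + c x y)
    (hf2 : ∀ x y, (x, y) ∈ Ω → HasDerivAt (fun t => f x t) (f2 x y) y)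
    (hf22 : ∀ x y, (x, y) ∈ Ω → HasDerivAt (fun t => f2 x t) (f22 x y) y)
    (hb2 : ∀ x y, (x, y) ∈ Ω → HasDerivAt (fun t => b x t) (b2 x y) y)
    (hb22 : ∀ x y, (x, y) ∈ Ω → HasDerivAt (fun t => b2 x t) (b22 x y) y)
    (hc2 : ∀ x y, (x, y) ∈ Ω → HasDerivAt (fun t => c x t) (c2 x y) y)
    (hc22 : ∀ x y, (x, y) ∈ Ω → HasDerivAt (fun t => c2 x t) (c22 x y) y)
    {x y z : ℝ} (hxy : (x, y) ∈ Ω) (hz : z ∈ I) :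
    pdy (pdy u) x y z = f22 x y +
      ((b22 x y * z + c22 x y) * (a * z^2 + b x y * z + c x y)
        - (b2 x y * z + c2 x y)^2) / (a * z^2 + b x y * z + c x y)^2 := by
  have step1 : ∀ x' t : ℝ, (x', t) ∈ Ω → pdy u x' t z
      = f2 x' t + (b2 x' t * z + c2 x' t) / (a * z^2 + b x' t * z + c x' t) := by
    intro x' t ht
    have hQ : HasDerivAt (fun s => a * z^2 + b x' s * z + c x' s)
        (b2 x' t * z + c2 x' t) t := by
      have h := (((hb2 x' t ht).mul_const z).add (hc2 x' t ht)).const_add (a * z^2)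
      have e : (fun s => a * z^2 + b x' s * z + c x' s)
          = fun s => a * z^2 + (b x' s * z + c x' s) := by funext s; ring
      rw [e]; exact h
    have hQne : a * z^2 + b x' t * z + c x' t ≠ 0 := (hpos x' t z ht hz).ne'
    have hd : HasDerivAt (fun s => u x' s z)
        (f2 x' t + (b2 x' t * z + c2 x' t) / (a * z^2 + b x' t * z + c x' t)) t := by
      have heq : (fun s => u x' s z)
          = fun s => f x' s + Real.log (a * z^2 + b x' s * z + c x' s) := by
        funext s; rw [hu]
      rw [heq]
      exact (hf2 x' t ht).add (hQ.log hQne)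
    exact hd.deriv
  have hnb : ∀ᶠ t in nhds y, (x, t) ∈ Ω :=
    (continuous_const.prodMk continuous_id).continuousAt.preimage_mem_nhds (hΩ.mem_nhds hxy)
  have hev : (fun t => pdy u x t z) =ᶠ[nhds y]
      (fun t => f2 x t + (b2 x t * z + c2 x t) / (a * z^2 + b x t * z + c x t)) := by
    filter_upwards [hnb] with t ht using step1 x t ht
  have hQne : a * z^2 + b x y * z + c x y ≠ 0 := (hpos x y z hxy hz).ne'
  have hnum : HasDerivAt (fun t => b2 x t * z + c2 x t) (b22 x y * z + c22 x y) y :=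
    ((hb22 x y hxy).mul_const z).add (hc22 x y hxy)
  have hden : HasDerivAt (fun t => a * z^2 + b x t * z + c x t) (b2 x y * z + c2 x y) y := by
    have h := (((hb2 x y hxy).mul_const z).add (hc2 x y hxy)).const_add (a * z^2)
    have e : (fun t => a * z^2 + b x t * z + c x t)
        = fun t => a * z^2 + (b x t * z + c x t) := by funext t; ring
    rw [e]; exact h
  have hdiv := hnum.div hden hQne
  have hd2 := (hf22 x y hxy).add hdiv
  show deriv (fun t => pdy u x t z) y = _
  rw [hev.deriv_eq, HasDerivAt.deriv (f := fun t => f2 x t + (b2 x t * z + c2 x t) / (a * z^2 + b x t * z + c x t)) hd2]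
  congr 1
  field_simp

lemma toda_aux_quartic {I : Set ℝ} (hIopen : IsOpen I) (hIne : I.Nonempty)
    {A4 A3 A2 A1 A0 : ℝ}
    (h : ∀ z ∈ I, A4 * z^4 + A3 * z^3 + A2 * z^2 + A1 * z + A0 = 0) :
    A4 = 0 ∧ A3 = 0 ∧ A2 = 0 ∧ A1 = 0 ∧ A0 = 0 := by
  obtain ⟨z₀, hz₀⟩ := hIne
  obtain ⟨ε, hε, hball⟩ := Metric.isOpen_iff.1 hIopen z₀ hz₀
  have hIinf : I.Infinite := by
    refine Set.Infinite.mono ?_ (Set.Ioo_infinite (by linarith : z₀ - ε < z₀ + ε))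
    intro w hw
    apply hball
    rw [Real.ball_eq_Ioo]; exact hw
  set p : Polynomial ℝ := C A4 * X^4 + C A3 * X^3 + C A2 * X^2 + C A1 * X + C A0 with hp
  have hroots : ∀ z ∈ I, p.IsRoot z := by
    intro z hz
    simp only [IsRoot, hp, eval_add, eval_mul, eval_pow, eval_C, eval_X]
    exact h z hz
  have hp0 : p = 0 := p.eq_zero_of_infinite_isRoot (hIinf.mono hroots)
  refine ⟨?_, ?_, ?_, ?_, ?_⟩
  · have := congrArg (fun q => Polynomial.coeff q 4) hp0
    simpa [hp, coeff_X, coeff_one] using this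
  · have := congrArg (fun q => Polynomial.coeff q 3) hp0
    simpa [hp, coeff_X, coeff_one] using this
  · have := congrArg (fun q => Polynomial.coeff q 2) hp0
    simpa [hp, coeff_X, coeff_one] using this
  · have := congrArg (fun q => Polynomial.coeff q 1) hp0
    simpa [hp, coeff_X, coeff_one] using this
  · have := congrArg (fun q => Polynomial.coeff q 0) hp0
    simpa [hp, coeff_X, coeff_one] using this

/-- for the ansatz `u = f(x,y) + log(a·z² + b(x,y)·z + c(x,y))` with `a ≠ 0`
and the quadratic positive on `Ω × I`, the SU(∞) Toda field equation holds on `Ω × I`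
iff the five coefficient equations (Liouville equation and equations (one)–(four))
hold on `Ω`. -/
theorem toda_ansatz_iff_coefficient_system
    (Ω : Set (ℝ × ℝ)) (hΩ : IsOpen Ω)
    (I : Set ℝ) (hIopen : IsOpen I) (hIne : I.Nonempty) (hIint : I.OrdConnected)
    (a : ℝ) (ha : a ≠ 0)
    (f b c : ℝ → ℝ → ℝ)
    (hf : ContDiffOn ℝ (⊤ : ℕ∞) (fun p : ℝ × ℝ => f p.1 p.2) Ω)
    (hb : ContDiffOn ℝ (⊤ : ℕ∞) (fun p : ℝ × ℝ => b p.1 p.2) Ω)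
    (hc : ContDiffOn ℝ (⊤ : ℕ∞) (fun p : ℝ × ℝ => c p.1 p.2) Ω)
    (hpos : ∀ x y z : ℝ, (x, y) ∈ Ω → z ∈ I → 0 < a * z^2 + b x y * z + c x y)
    (u : ℝ → ℝ → ℝ → ℝ)
    (hu : ∀ x y z : ℝ, u x y z = f x y + Real.log (a * z^2 + b x y * z + c x y)) :
    (∀ x y z : ℝ, (x, y) ∈ Ω → z ∈ I →
        pdx (pdx u) x y z + pdy (pdy u) x y z +
          pdz (pdz (fun x' y' z' => Real.exp (u x' y' z'))) x y z = 0)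
    ↔ (∀ x y : ℝ, (x, y) ∈ Ω →
        (pdx2 (pdx2 f) x y + pdy2 (pdy2 f) x y + 2 * a * Real.exp (f x y) = 0) ∧
        (a * (pdx2 (pdx2 b) x y + pdy2 (pdy2 b) x y) = 0) ∧
        (a * (pdx2 (pdx2 c) x y + pdy2 (pdy2 c) x y) +
            b x y * (pdx2 (pdx2 b) x y + pdy2 (pdy2 b) x y)
          = (pdx2 b x y)^2 + (pdy2 b x y)^2) ∧
        (b x y * (pdx2 (pdx2 c) x y + pdy2 (pdy2 c) x y) +
            c x y * (pdx2 (pdx2 b) x y + pdy2 (pdy2 b) x y)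
          = 2 * (pdx2 b x y * pdx2 c x y + pdy2 b x y * pdy2 c x y)) ∧
        (c x y * (pdx2 (pdx2 c) x y + pdy2 (pdy2 c) x y)
          = (pdx2 c x y)^2 + (pdy2 c x y)^2)) := by
  obtain ⟨f1, f2, hf1s, hf2s, hf1, hf2⟩ := toda_aux_master hΩ hf
  obtain ⟨f11, -, -, -, hf11, -⟩ := toda_aux_master hΩ hf1s
  obtain ⟨-, f22, -, -, -, hf22⟩ := toda_aux_master hΩ hf2s
  obtain ⟨b1, b2, hb1s, hb2s, hb1, hb2⟩ := toda_aux_master hΩ hb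
  obtain ⟨b11, -, -, -, hb11, -⟩ := toda_aux_master hΩ hb1s
  obtain ⟨-, b22, -, -, -, hb22⟩ := toda_aux_master hΩ hb2s
  obtain ⟨c1, c2, hc1s, hc2s, hc1, hc2⟩ := toda_aux_master hΩ hc
  obtain ⟨c11, -, -, -, hc11, -⟩ := toda_aux_master hΩ hc1s
  obtain ⟨-, c22, -, -, -, hc22⟩ := toda_aux_master hΩ hc2s
  constructor
  · intro hT x y hxy
    -- conversions
    have ef : pdx2 (pdx2 f) x y = f11 x y := toda_aux_pdx2_pdx2 hΩ hf1 hf11 hxy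
    have ef' : pdy2 (pdy2 f) x y = f22 x y := toda_aux_pdy2_pdy2 hΩ hf2 hf22 hxy
    have eb : pdx2 (pdx2 b) x y = b11 x y := toda_aux_pdx2_pdx2 hΩ hb1 hb11 hxy
    have eb' : pdy2 (pdy2 b) x y = b22 x y := toda_aux_pdy2_pdy2 hΩ hb2 hb22 hxy
    have ec : pdx2 (pdx2 c) x y = c11 x y := toda_aux_pdx2_pdx2 hΩ hc1 hc11 hxy
    have ec' : pdy2 (pdy2 c) x y = c22 x y := toda_aux_pdy2_pdy2 hΩ hc2 hc22 hxy
    have eb1 : pdx2 b x y = b1 x y := (hb1 x y hxy).deriv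
    have eb2 : pdy2 b x y = b2 x y := (hb2 x y hxy).deriv
    have ec1 : pdx2 c x y = c1 x y := (hc1 x y hxy).deriv
    have ec2 : pdy2 c x y = c2 x y := (hc2 x y hxy).deriv
    set L : ℝ := f11 x y + f22 x y + 2 * a * Real.exp (f x y) with hL
    set B : ℝ := b x y with hB
    set C' : ℝ := c x y with hC
    set Db : ℝ := b11 x y + b22 x y with hDb
    set Dc : ℝ := c11 x y + c22 x y with hDc
    have hroot : ∀ z ∈ I,
        (L * a^2) * z^4 + (L * (2*a*B) + a*Db) * z^3
          + (L * (B^2 + 2*a*C') + B*Db + a*Dc - (b1 x y)^2 - (b2 x y)^2) * z^2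
          + (L * (2*B*C') + B*Dc + C'*Db - 2*(b1 x y)*(c1 x y) - 2*(b2 x y)*(c2 x y)) * z
          + (L * C'^2 + C'*Dc - (c1 x y)^2 - (c2 x y)^2) = 0 := by
      intro z hz
      have h := hT x y z hxy hz
      rw [toda_aux_pdxx hΩ hu hpos hf1 hf11 hb1 hb11 hc1 hc11 hxy hz,
          toda_aux_pdyy hΩ hu hpos hf2 hf22 hb2 hb22 hc2 hc22 hxy hz,
          toda_aux_pdzz hIopen (hu x y) (fun w hw => hpos x y w hxy hw) hz] at h
      have hQne : z * (z * a + b x y) + c x y ≠ 0 := by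
        convert (hpos x y z hxy hz).ne' using 1; ring
      field_simp at h
      linear_combination h
    obtain ⟨hA4, hA3, hA2, hA1, hA0⟩ := toda_aux_quartic hIopen hIne hroot
    have ha2 : a^2 ≠ 0 := pow_ne_zero 2 ha
    have hL0 : L = 0 := by
      rcases mul_eq_zero.1 hA4 with h | h
      · exact h
      · exact absurd h ha2
    have hii : a * Db = 0 := by linear_combination hA3 - (2*a*B) * hL0
    have hDb0 : Db = 0 := by
      rcases mul_eq_zero.1 hii with h | h
      · exact absurd h ha
      · exact h
    refine ⟨?_, ?_, ?_, ?_, ?_⟩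
    · rw [ef, ef']; linear_combination hL0
    · rw [eb, eb']; exact hii
    · rw [ec, ec', eb, eb', eb1, eb2]
      linear_combination hA2 - (B^2 + 2*a*C') * hL0
    · rw [ec, ec', eb, eb', eb1, eb2, ec1, ec2]
      linear_combination hA1 - (2*B*C') * hL0
    · rw [ec, ec', ec1, ec2]
      linear_combination hA0 - C'^2 * hL0
  · intro hcond x y z hxy hz
    have ef : pdx2 (pdx2 f) x y = f11 x y := toda_aux_pdx2_pdx2 hΩ hf1 hf11 hxy
    have ef' : pdy2 (pdy2 f) x y = f22 x y := toda_aux_pdy2_pdy2 hΩ hf2 hf22 hxy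
    have eb : pdx2 (pdx2 b) x y = b11 x y := toda_aux_pdx2_pdx2 hΩ hb1 hb11 hxy
    have eb' : pdy2 (pdy2 b) x y = b22 x y := toda_aux_pdy2_pdy2 hΩ hb2 hb22 hxy
    have ec : pdx2 (pdx2 c) x y = c11 x y := toda_aux_pdx2_pdx2 hΩ hc1 hc11 hxy
    have ec' : pdy2 (pdy2 c) x y = c22 x y := toda_aux_pdy2_pdy2 hΩ hc2 hc22 hxy
    have eb1 : pdx2 b x y = b1 x y := (hb1 x y hxy).deriv
    have eb2 : pdy2 b x y = b2 x y := (hb2 x y hxy).deriv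
    have ec1 : pdx2 c x y = c1 x y := (hc1 x y hxy).deriv
    have ec2 : pdy2 c x y = c2 x y := (hc2 x y hxy).deriv
    obtain ⟨h1, h2, h3, h4, h5⟩ := hcond x y hxy
    rw [ef, ef'] at h1
    rw [eb, eb'] at h2
    rw [ec, ec', eb, eb', eb1, eb2] at h3
    rw [ec, ec', eb, eb', eb1, eb2, ec1, ec2] at h4
    rw [ec, ec', ec1, ec2] at h5
    rw [toda_aux_pdxx hΩ hu hpos hf1 hf11 hb1 hb11 hc1 hc11 hxy hz,
        toda_aux_pdyy hΩ hu hpos hf2 hf22 hb2 hb22 hc2 hc22 hxy hz,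
        toda_aux_pdzz hIopen (hu x y) (fun w hw => hpos x y w hxy hw) hz]
    have hQne : z * (z * a + b x y) + c x y ≠ 0 := by
      convert (hpos x y z hxy hz).ne' using 1; ring
    field_simp
    linear_combination (a * z^2 + b x y * z + c x y)^2 * h1 + z^3 * h2 + z^2 * h3
      + z * h4 + h5
end

section
/- Let Ω ⊆ ℂ be open, B, C real constants, and φ, ψ holomorphic functions on Ω. Set b = B·e^{2 Re φ} and c = C·e^{2 Re ψ} (functions of (x,y) with x+iy ∈ Ω). If b and c satisfy b·(c_xx + c_yy) + c·(b_xx + b_yy) = 2(b_x c_x + b_y c_y) on Ω, then B = 0, or C = 0, or φ′ = ψ′ identically on Ω. -/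
open Complex

private lemma keyx {f : ℂ → ℂ} {d : ℂ} {x y : ℝ} (hf : HasDerivAt f d (↑x + ↑y * I)) :
    HasDerivAt (fun t : ℝ => (f (↑t + ↑y * I)).re) d.re x := by
  have h0 : HasDerivAt (fun w : ℂ => w + ↑y * I) 1 ↑x := (hasDerivAt_id _).add_const _
  have h1 : HasDerivAt (fun w : ℂ => f (w + ↑y * I)) d ↑x := by
    have := hf.comp (x : ℂ) h0
    rwa [mul_one] at this
  have h2 := h1.comp_ofReal
  have h3 := Complex.reCLM.hasFDerivAt.comp_hasDerivAt x h2
  exact h3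

private lemma keyy {f : ℂ → ℂ} {d : ℂ} {x y : ℝ} (hf : HasDerivAt f d (↑x + ↑y * I)) :
    HasDerivAt (fun t : ℝ => (f (↑x + ↑t * I)).re) (d * I).re y := by
  have h0 : HasDerivAt (fun w : ℂ => ↑x + w * I) I ↑y := by
    simpa using ((hasDerivAt_id ((y : ℝ) : ℂ)).mul_const I).const_add (↑x : ℂ)
  have h1 : HasDerivAt (fun w : ℂ => f (↑x + w * I)) (d * I) ↑y := by
    exact hf.comp (y : ℂ) h0
  have h2 := h1.comp_ofReal
  have h3 := Complex.reCLM.hasFDerivAt.comp_hasDerivAt y h2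
  exact h3

private lemma hasDerivAt_bx {K : ℝ} {f : ℂ → ℂ} {d : ℂ} {x y : ℝ}
    (hf : HasDerivAt f d (↑x + ↑y * I)) :
    HasDerivAt (fun t : ℝ => K * Real.exp (2 * (f (↑t + ↑y * I)).re))
      (K * Real.exp (2 * (f (↑x + ↑y * I)).re) * (2 * d.re)) x := by
  have h := (((keyx hf).const_mul 2).exp).const_mul K
  rw [mul_assoc]
  exact h

private lemma hasDerivAt_by {K : ℝ} {f : ℂ → ℂ} {d : ℂ} {x y : ℝ}
    (hf : HasDerivAt f d (↑x + ↑y * I)) :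
    HasDerivAt (fun t : ℝ => K * Real.exp (2 * (f (↑x + ↑t * I)).re))
      (K * Real.exp (2 * (f (↑x + ↑y * I)).re) * (2 * (d * I).re)) y := by
  have h := (((keyy hf).const_mul 2).exp).const_mul K
  rw [mul_assoc]
  exact h

private lemma all_derivs {Ω : Set ℂ} (hΩ : IsOpen Ω) {K : ℝ} {f : ℂ → ℂ}
    (hf : DifferentiableOn ℂ f Ω) (bf : ℝ → ℝ → ℝ)
    (hbf : ∀ x y : ℝ, bf x y = K * Real.exp (2 * (f (↑x + ↑y * I)).re))
    (x y : ℝ) (hm : (↑x + ↑y * I) ∈ Ω) :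
    pdx2 bf x y = K * Real.exp (2 * (f (↑x + ↑y * I)).re) * (2 * (deriv f (↑x + ↑y * I)).re)
    ∧ pdy2 bf x y
        = K * Real.exp (2 * (f (↑x + ↑y * I)).re) * (2 * (deriv f (↑x + ↑y * I) * I).re)
    ∧ pdx2 (pdx2 bf) x y + pdy2 (pdy2 bf) x y
        = K * Real.exp (2 * (f (↑x + ↑y * I)).re) *
          (4 * ((deriv f (↑x + ↑y * I)).re ^ 2 + (deriv f (↑x + ↑y * I)).im ^ 2)) := by
  have hfa : AnalyticOnNhd ℂ f Ω := hf.analyticOnNhd hΩ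
  have hd : ∀ w ∈ Ω, HasDerivAt f (deriv f w) w := fun w hw =>
    (hf.differentiableAt (hΩ.mem_nhds hw)).hasDerivAt
  have hd' : ∀ w ∈ Ω, HasDerivAt (deriv f) (deriv (deriv f) w) w := fun w hw =>
    ((hfa.deriv w hw).differentiableAt).hasDerivAt
  have h1x : ∀ t s : ℝ, (↑t + ↑s * I) ∈ Ω →
      pdx2 bf t s = K * Real.exp (2 * (f (↑t + ↑s * I)).re) *
        (2 * (deriv f (↑t + ↑s * I)).re) := by
    intro t s hm'
    have hfun : (fun t' : ℝ => bf t' s)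
        = fun t' : ℝ => K * Real.exp (2 * (f (↑t' + ↑s * I)).re) :=
      funext fun t' => hbf t' s
    show deriv (fun t' : ℝ => bf t' s) t = _
    rw [hfun]
    exact (hasDerivAt_bx (hd _ hm')).deriv
  have h1y : ∀ t s : ℝ, (↑t + ↑s * I) ∈ Ω →
      pdy2 bf t s = K * Real.exp (2 * (f (↑t + ↑s * I)).re) *
        (2 * (deriv f (↑t + ↑s * I) * I).re) := by
    intro t s hm'
    have hfun : (fun s' : ℝ => bf t s')
        = fun s' : ℝ => K * Real.exp (2 * (f (↑t + ↑s' * I)).re) :=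
      funext fun s' => hbf t s'
    show deriv (fun s' : ℝ => bf t s') s = _
    rw [hfun]
    exact (hasDerivAt_by (hd _ hm')).deriv
  obtain ⟨ε, hε, hball⟩ := Metric.isOpen_iff.mp hΩ _ hm
  refine ⟨h1x x y hm, h1y x y hm, ?_⟩
  have hmemx : ∀ t : ℝ, dist t x < ε → (↑t + ↑y * I) ∈ Ω := by
    intro t ht
    apply hball
    rw [Metric.mem_ball, Complex.dist_eq,
      show ((t : ℂ) + ↑y * I) - (↑x + ↑y * I) = ((t - x : ℝ) : ℂ) by push_cast; ring]
    simpa [Real.dist_eq, ← Complex.ofReal_sub, Complex.norm_real] using ht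
  have hmemy : ∀ s : ℝ, dist s y < ε → (↑x + ↑s * I) ∈ Ω := by
    intro s hs
    apply hball
    rw [Metric.mem_ball, Complex.dist_eq,
      show ((x : ℂ) + ↑s * I) - (↑x + ↑y * I) = ((s - y : ℝ) : ℂ) * I by push_cast; ring]
    simpa [Real.dist_eq, ← Complex.ofReal_sub, Complex.norm_real, map_mul] using hs
  have hevx : (fun t => pdx2 bf t y) =ᶠ[nhds x]
      (fun t : ℝ => K * Real.exp (2 * (f (↑t + ↑y * I)).re) *
        (2 * (deriv f (↑t + ↑y * I)).re)) := by
    filter_upwards [Metric.ball_mem_nhds x hε] with t ht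
    exact h1x t y (hmemx t ht)
  have hevy : (fun s => pdy2 bf x s) =ᶠ[nhds y]
      (fun s : ℝ => K * Real.exp (2 * (f (↑x + ↑s * I)).re) *
        (2 * (deriv f (↑x + ↑s * I) * I).re)) := by
    filter_upwards [Metric.ball_mem_nhds y hε] with s hs
    exact h1y x s (hmemy s hs)
  have hprodx : HasDerivAt
      (fun t : ℝ => K * Real.exp (2 * (f (↑t + ↑y * I)).re) *
        (2 * (deriv f (↑t + ↑y * I)).re))
      ((K * Real.exp (2 * (f (↑x + ↑y * I)).re) * (2 * (deriv f (↑x + ↑y * I)).re)) *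
          (2 * (deriv f (↑x + ↑y * I)).re)
        + (K * Real.exp (2 * (f (↑x + ↑y * I)).re)) *
          (2 * (deriv (deriv f) (↑x + ↑y * I)).re)) x :=
    (hasDerivAt_bx (hd _ hm)).mul ((keyx (hd' _ hm)).const_mul 2)
  have hprody : HasDerivAt
      (fun s : ℝ => K * Real.exp (2 * (f (↑x + ↑s * I)).re) *
        (2 * (deriv f (↑x + ↑s * I) * I).re))
      ((K * Real.exp (2 * (f (↑x + ↑y * I)).re) *
          (2 * (deriv f (↑x + ↑y * I) * I).re)) * (2 * (deriv f (↑x + ↑y * I) * I).re)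
        + (K * Real.exp (2 * (f (↑x + ↑y * I)).re)) *
          (2 * ((deriv (deriv f) (↑x + ↑y * I) * I) * I).re)) y :=
    (hasDerivAt_by (hd _ hm)).mul ((keyy ((hd' _ hm).mul_const I)).const_mul 2)
  have hxx : pdx2 (pdx2 bf) x y
      = (K * Real.exp (2 * (f (↑x + ↑y * I)).re) * (2 * (deriv f (↑x + ↑y * I)).re)) *
          (2 * (deriv f (↑x + ↑y * I)).re)
        + (K * Real.exp (2 * (f (↑x + ↑y * I)).re)) *
          (2 * (deriv (deriv f) (↑x + ↑y * I)).re) := by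
    show deriv (fun t => pdx2 bf t y) x = _
    rw [hevx.deriv_eq]
    exact hprodx.deriv
  have hyy : pdy2 (pdy2 bf) x y
      = (K * Real.exp (2 * (f (↑x + ↑y * I)).re) * (2 * (deriv f (↑x + ↑y * I) * I).re)) *
          (2 * (deriv f (↑x + ↑y * I) * I).re)
        + (K * Real.exp (2 * (f (↑x + ↑y * I)).re)) *
          (2 * ((deriv (deriv f) (↑x + ↑y * I) * I) * I).re) := by
    show deriv (fun s => pdy2 bf x s) y = _
    rw [hevy.deriv_eq]
    exact hprody.deriv
  rw [hxx, hyy]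
  simp only [Complex.mul_I_re, Complex.mul_I_im]
  ring

private lemma main_aux {Ω : Set ℂ} (hΩ : IsOpen Ω) {B C : ℝ} {φ ψ : ℂ → ℂ}
    (hφ : DifferentiableOn ℂ φ Ω) (hψ : DifferentiableOn ℂ ψ Ω)
    (b c : ℝ → ℝ → ℝ)
    (hb : ∀ x y : ℝ, b x y = B * Real.exp (2 * (φ (↑x + ↑y * I)).re))
    (hc : ∀ x y : ℝ, c x y = C * Real.exp (2 * (ψ (↑x + ↑y * I)).re))
    (hB : B ≠ 0) (hC : C ≠ 0) (x y : ℝ) (hm : (↑x + ↑y * I) ∈ Ω)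
    (heq : b x y * (pdx2 (pdx2 c) x y + pdy2 (pdy2 c) x y) +
        c x y * (pdx2 (pdx2 b) x y + pdy2 (pdy2 b) x y)
      = 2 * (pdx2 b x y * pdx2 c x y + pdy2 b x y * pdy2 c x y)) :
    deriv φ (↑x + ↑y * I) = deriv ψ (↑x + ↑y * I) := by
  obtain ⟨hbx, hby, hbL⟩ := all_derivs hΩ hφ b hb x y hm
  obtain ⟨hcx, hcy, hcL⟩ := all_derivs hΩ hψ c hc x y hm
  set P := deriv φ (↑x + ↑y * I) with hP
  set Q := deriv ψ (↑x + ↑y * I) with hQ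
  set e1 := Real.exp (2 * (φ (↑x + ↑y * I)).re) with he1
  set e2 := Real.exp (2 * (ψ (↑x + ↑y * I)).re) with he2
  rw [hbx, hby, hbL, hcx, hcy, hcL, hb x y, hc x y, ← he1, ← he2] at heq
  simp only [Complex.mul_I_re] at heq
  have hne : (B * e1) * (C * e2) ≠ 0 :=
    mul_ne_zero (mul_ne_zero hB (Real.exp_ne_zero _)) (mul_ne_zero hC (Real.exp_ne_zero _))
  have key : ((B * e1) * (C * e2)) * (((P.re - Q.re) ^ 2 + (P.im - Q.im) ^ 2) * 4) = 0 := by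
    linear_combination heq
  have h0 : (P.re - Q.re) ^ 2 + (P.im - Q.im) ^ 2 = 0 := by
    rcases mul_eq_zero.mp key with h | h
    · exact absurd h hne
    · linarith
  have h1 : P.re = Q.re := by nlinarith [sq_nonneg (P.re - Q.re), sq_nonneg (P.im - Q.im)]
  have h2 : P.im = Q.im := by nlinarith [sq_nonneg (P.re - Q.re), sq_nonneg (P.im - Q.im)]
  exact Complex.ext h1 h2

/-- if `b = B·|e^φ|² = B·e^{2Reφ}` and `c = C·|e^ψ|² = C·e^{2Reψ}` with
`φ, ψ` holomorphic on open `Ω ⊆ ℂ` satisfy equation (three),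
`b(c_xx + c_yy) + c(b_xx + b_yy) = 2(b_x c_x + b_y c_y)` on `Ω`, then `B = 0`, or `C = 0`,
or `φ′ = ψ′` identically on `Ω`. -/
theorem equation_three_separable_case
    (Ω : Set ℂ) (hΩ : IsOpen Ω) (B C : ℝ)
    (φ ψ : ℂ → ℂ)
    (hφ : DifferentiableOn ℂ φ Ω) (hψ : DifferentiableOn ℂ ψ Ω)
    (b c : ℝ → ℝ → ℝ)
    (hb : ∀ x y : ℝ, b x y = B * Real.exp (2 * (φ (x + y * Complex.I)).re))
    (hc : ∀ x y : ℝ, c x y = C * Real.exp (2 * (ψ (x + y * Complex.I)).re))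
    (heq : ∀ x y : ℝ, (x + y * Complex.I) ∈ Ω →
      b x y * (pdx2 (pdx2 c) x y + pdy2 (pdy2 c) x y) +
        c x y * (pdx2 (pdx2 b) x y + pdy2 (pdy2 b) x y)
      = 2 * (pdx2 b x y * pdx2 c x y + pdy2 b x y * pdy2 c x y)) :
    B = 0 ∨ C = 0 ∨ ∀ ζ ∈ Ω, deriv φ ζ = deriv ψ ζ := by
  by_cases hB : B = 0
  · exact Or.inl hB
  by_cases hC : C = 0
  · exact Or.inr (Or.inl hC)
  refine Or.inr (Or.inr fun ζ hζ => ?_)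
  have hm : ((ζ.re : ℂ) + (ζ.im : ℂ) * I) ∈ Ω := by rwa [re_add_im]
  have h := main_aux hΩ hφ hψ b c hb hc hB hC ζ.re ζ.im hm (heq _ _ hm)
  rwa [re_add_im] at h
end

section
/- Let U ⊆ ℝ³ be open and let u be a smooth solution of the SU(∞) Toda field equation u_xx + u_yy + (e^u)_zz = 0 on U. Then for any real constants a, b, the function w(x,y,z) = a·(1 − (1/2)·z·u_z) + (1/2)·b·u_z satisfies the abelian monopole equation w_xx + w_yy + (e^u w)_zz = 0 on U. -/
open Real Filter Topology
open scoped ContDiff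

abbrev P3 := ℝ × ℝ × ℝ
noncomputable def Dv (v : P3) (F : P3 → ℝ) : P3 → ℝ := fun p => fderiv ℝ F p v

example : ((1:ℝ),(0:ℝ),(0:ℝ)).2.2 = 0 := rfl

theorem one_le_inf : (1 : WithTop ℕ∞) ≤ ∞ := by exact_mod_cast le_top
theorem two_le_inf : (2 : WithTop ℕ∞) ≤ ∞ := by
  have : ((2:ℕ∞) : WithTop ℕ∞) ≤ ((⊤:ℕ∞) : WithTop ℕ∞) := WithTop.coe_le_coe.2 le_top
  simpa using this

theorem diffAt {U : Set P3} (hU : IsOpen U) {F : P3 → ℝ} (hF : ContDiffOn ℝ ∞ F U)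
    {q : P3} (hq : q ∈ U) : DifferentiableAt ℝ F q :=
  ((hF.differentiableOn (by simp)).differentiableAt (hU.mem_nhds hq))

theorem Dv_contDiffOn {U : Set P3} (hU : IsOpen U) {F : P3 → ℝ}
    (hF : ContDiffOn ℝ ∞ F U) (v : P3) : ContDiffOn ℝ ∞ (Dv v F) U :=
  (ContinuousLinearMap.apply ℝ ℝ v).contDiff.comp_contDiffOn
    (hF.fderiv_of_isOpen hU (le_of_eq rfl))

theorem Dv_congrOn {U : Set P3} (hU : IsOpen U) {F G : P3 → ℝ} (h : ∀ p ∈ U, F p = G p)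
    {q : P3} (hq : q ∈ U) (v : P3) : Dv v F q = Dv v G q := by
  have : F =ᶠ[𝓝 q] G := Filter.eventuallyEq_of_mem (hU.mem_nhds hq) h
  simp only [Dv, this.fderiv_eq]

theorem Dv_comm {U : Set P3} (hU : IsOpen U) {F : P3 → ℝ} (hF : ContDiffOn ℝ ∞ F U)
    {q : P3} (hq : q ∈ U) (v w : P3) : Dv v (Dv w F) q = Dv w (Dv v F) q := by
  have hsym : IsSymmSndFDerivAt ℝ F q :=
    (hF.contDiffAt (hU.mem_nhds hq)).isSymmSndFDerivAt (by rw [minSmoothness_of_isRCLikeNormedField]; exact two_le_inf)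
  have hd : DifferentiableAt ℝ (fderiv ℝ F) q :=
    (((hF.fderiv_of_isOpen (m := ∞) hU (le_of_eq rfl)).differentiableOn
      (by simp)).differentiableAt (hU.mem_nhds hq))
  have key : ∀ v w : P3, Dv v (Dv w F) q = fderiv ℝ (fderiv ℝ F) q v w := by
    intro v w
    have h1 : HasFDerivAt (fun p => fderiv ℝ F p w)
        ((ContinuousLinearMap.apply ℝ ℝ w).comp (fderiv ℝ (fderiv ℝ F) q)) q :=
      (ContinuousLinearMap.apply ℝ ℝ w).hasFDerivAt.comp q hd.hasFDerivAt
    have e0 : Dv v (Dv w F) q = fderiv ℝ (fun p => fderiv ℝ F p w) q v := rfl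
    rw [e0, h1.fderiv]; rfl
  rw [key, key, hsym.eq]

theorem Dv_add {F G : P3 → ℝ} {q v : P3} (hf : DifferentiableAt ℝ F q)
    (hg : DifferentiableAt ℝ G q) :
    Dv v (fun p => F p + G p) q = Dv v F q + Dv v G q := by
  simp only [Dv]; rw [fderiv_fun_add hf hg]; rfl

theorem Dv_neg {F : P3 → ℝ} {q v : P3} :
    Dv v (fun p => -F p) q = -Dv v F q := by
  simp only [Dv]; rw [fderiv_fun_neg]; rfl

theorem Dv_const_add {F : P3 → ℝ} {q v : P3} (k : ℝ) :
    Dv v (fun p => k + F p) q = Dv v F q := by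
  simp only [Dv]; rw [fderiv_const_add]

theorem Dv_mul {F G : P3 → ℝ} {q v : P3} (hf : DifferentiableAt ℝ F q)
    (hg : DifferentiableAt ℝ G q) :
    Dv v (fun p => F p * G p) q = Dv v F q * G q + F q * Dv v G q := by
  simp only [Dv]; rw [fderiv_fun_mul hf hg]
  simp only [ContinuousLinearMap.add_apply, ContinuousLinearMap.smul_apply, smul_eq_mul]
  ring

theorem Dv_const_mul {F : P3 → ℝ} {q v : P3} (hf : DifferentiableAt ℝ F q) (k : ℝ) :
    Dv v (fun p => k * F p) q = k * Dv v F q := by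
  simp only [Dv]; rw [fderiv_const_mul hf]; rfl

theorem Dv_exp {F : P3 → ℝ} {q v : P3} (hf : DifferentiableAt ℝ F q) :
    Dv v (fun p => Real.exp (F p)) q = Real.exp (F q) * Dv v F q := by
  simp only [Dv]; rw [fderiv_exp hf]; rfl

theorem pdx_eq_Dv {U : Set P3} (hU : IsOpen U) {F : P3 → ℝ} (hF : ContDiffOn ℝ ∞ F U)
    {f : ℝ → ℝ → ℝ → ℝ} (hfF : ∀ p ∈ U, f p.1 p.2.1 p.2.2 = F p) :
    ∀ p ∈ U, pdx f p.1 p.2.1 p.2.2 = Dv (1, 0, 0) F p := by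
  rintro ⟨x, y, z⟩ hp
  have hL : HasDerivAt (fun t : ℝ => ((t, y, z) : P3)) ((1 : ℝ), (0 : ℝ), (0 : ℝ)) x :=
    (hasDerivAt_id x).prodMk (hasDerivAt_const x ((y : ℝ), (z : ℝ)))
  have hD : HasDerivAt (fun t : ℝ => F (t, y, z)) (Dv (1, 0, 0) F (x, y, z)) x :=
    (diffAt hU hF hp).hasFDerivAt.comp_hasDerivAt x hL
  have hopen : IsOpen {t : ℝ | ((t, y, z) : P3) ∈ U} :=
    hU.preimage (by continuity : Continuous fun t : ℝ => ((t, y, z) : P3))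
  have hev : (fun t => f t y z) =ᶠ[𝓝 x] fun t => F (t, y, z) :=
    Filter.eventuallyEq_of_mem (hopen.mem_nhds hp) (fun t ht => hfF (t, y, z) ht)
  show deriv (fun t => f t y z) x = _
  rw [hev.deriv_eq, hD.deriv]

theorem pdy_eq_Dv {U : Set P3} (hU : IsOpen U) {F : P3 → ℝ} (hF : ContDiffOn ℝ ∞ F U)
    {f : ℝ → ℝ → ℝ → ℝ} (hfF : ∀ p ∈ U, f p.1 p.2.1 p.2.2 = F p) :
    ∀ p ∈ U, pdy f p.1 p.2.1 p.2.2 = Dv (0, 1, 0) F p := by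
  rintro ⟨x, y, z⟩ hp
  have hL : HasDerivAt (fun t : ℝ => ((x, t, z) : P3)) ((0 : ℝ), (1 : ℝ), (0 : ℝ)) y :=
    (hasDerivAt_const y x).prodMk ((hasDerivAt_id y).prodMk (hasDerivAt_const y z))
  have hD : HasDerivAt (fun t : ℝ => F (x, t, z)) (Dv (0, 1, 0) F (x, y, z)) y :=
    (diffAt hU hF hp).hasFDerivAt.comp_hasDerivAt y hL
  have hopen : IsOpen {t : ℝ | ((x, t, z) : P3) ∈ U} :=
    hU.preimage (by continuity : Continuous fun t : ℝ => ((x, t, z) : P3))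
  have hev : (fun t => f x t z) =ᶠ[𝓝 y] fun t => F (x, t, z) :=
    Filter.eventuallyEq_of_mem (hopen.mem_nhds hp) (fun t ht => hfF (x, t, z) ht)
  show deriv (fun t => f x t z) y = _
  rw [hev.deriv_eq, hD.deriv]

theorem pdz_eq_Dv {U : Set P3} (hU : IsOpen U) {F : P3 → ℝ} (hF : ContDiffOn ℝ ∞ F U)
    {f : ℝ → ℝ → ℝ → ℝ} (hfF : ∀ p ∈ U, f p.1 p.2.1 p.2.2 = F p) :
    ∀ p ∈ U, pdz f p.1 p.2.1 p.2.2 = Dv (0, 0, 1) F p := by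
  rintro ⟨x, y, z⟩ hp
  have hL : HasDerivAt (fun t : ℝ => ((x, y, t) : P3)) ((0 : ℝ), (0 : ℝ), (1 : ℝ)) z :=
    (hasDerivAt_const z x).prodMk ((hasDerivAt_const z y).prodMk (hasDerivAt_id z))
  have hD : HasDerivAt (fun t : ℝ => F (x, y, t)) (Dv (0, 0, 1) F (x, y, z)) z :=
    (diffAt hU hF hp).hasFDerivAt.comp_hasDerivAt z hL
  have hopen : IsOpen {t : ℝ | ((x, y, t) : P3) ∈ U} :=
    hU.preimage (by continuity : Continuous fun t : ℝ => ((x, y, t) : P3))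
  have hev : (fun t => f x y t) =ᶠ[𝓝 z] fun t => F (x, y, t) :=
    Filter.eventuallyEq_of_mem (hopen.mem_nhds hp) (fun t ht => hfF (x, y, t) ht)
  show deriv (fun t => f x y t) z = _
  rw [hev.deriv_eq, hD.deriv]

noncomputable def Efun (F : P3 → ℝ) : P3 → ℝ := fun q => Real.exp (F q)
noncomputable def Gfun (F : P3 → ℝ) : P3 → ℝ := Dv (0, 0, 1) F
noncomputable def cfun (a b : ℝ) : P3 → ℝ := fun p => b / 2 - a / 2 * p.2.2
noncomputable def Wfun (a b : ℝ) (F : P3 → ℝ) : P3 → ℝ :=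
  fun p => a * (1 - (1/2) * p.2.2 * Dv (0, 0, 1) F p) + (1/2) * b * Dv (0, 0, 1) F p

noncomputable def lz : P3 →L[ℝ] ℝ :=
  (ContinuousLinearMap.snd ℝ ℝ ℝ).comp (ContinuousLinearMap.snd ℝ ℝ (ℝ × ℝ))

theorem cfun_contDiff (a b : ℝ) : ContDiff ℝ ∞ (cfun a b) := by
  unfold cfun
  exact contDiff_const.sub (contDiff_const.mul (contDiff_snd.comp contDiff_snd))

theorem cfun_deriv (a b : ℝ) (q v : P3) : Dv v (cfun a b) q = -(a / 2) * v.2.2 := by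
  have h1 : HasFDerivAt (fun p : P3 => a / 2 * lz p) ((a / 2) • lz) q :=
    lz.hasFDerivAt.const_mul (a / 2)
  have h2 : HasFDerivAt (cfun a b) (-((a / 2) • lz)) q := h1.const_sub (b / 2)
  have e0 : Dv v (cfun a b) q = fderiv ℝ (cfun a b) q v := rfl
  rw [e0, h2.fderiv]
  simp [lz]

theorem Wfun_eq (a b : ℝ) (F : P3 → ℝ) :
    Wfun a b F = fun q => a + cfun a b q * Gfun F q := by
  funext q; unfold Wfun cfun Gfun; ring

theorem Wfun_contDiffOn {U : Set P3} (hU : IsOpen U) {F : P3 → ℝ}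
    (hF : ContDiffOn ℝ ∞ F U) (a b : ℝ) : ContDiffOn ℝ ∞ (Wfun a b F) U := by
  rw [Wfun_eq]
  exact contDiffOn_const.add ((cfun_contDiff a b).contDiffOn.mul (Dv_contDiffOn hU hF _))

theorem core {U : Set P3} (hU : IsOpen U) {F : P3 → ℝ} (hF : ContDiffOn ℝ ∞ F U) (a b : ℝ)
    (ht : ∀ p ∈ U, Dv (1,0,0) (Dv (1,0,0) F) p + Dv (0,1,0) (Dv (0,1,0) F) p
        + Dv (0,0,1) (Dv (0,0,1) (Efun F)) p = 0) :
    ∀ p ∈ U,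
      Dv (1,0,0) (Dv (1,0,0) (Wfun a b F)) p + Dv (0,1,0) (Dv (0,1,0) (Wfun a b F)) p
        + Dv (0,0,1) (Dv (0,0,1) (fun s => Efun F s * Wfun a b F s)) p = 0 := by
  intro p hp
  have hE : ContDiffOn ℝ ∞ (Efun F) U := Real.contDiff_exp.comp_contDiffOn hF
  have hG : ContDiffOn ℝ ∞ (Gfun F) U := Dv_contDiffOn hU hF _
  have hcd : ∀ q : P3, DifferentiableAt ℝ (cfun a b) q :=
    fun q => ((cfun_contDiff a b).differentiable (by simp)) q
  have hWf := Wfun_eq a b F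
  have hW : ContDiffOn ℝ ∞ (Wfun a b F) U := Wfun_contDiffOn hU hF a b
  -- first two directions
  have key12 : ∀ v : P3, v.2.2 = 0 → ∀ q ∈ U, Dv v (Dv v (Wfun a b F)) q
      = cfun a b q * Dv (0,0,1) (Dv v (Dv v F)) q := by
    intro v hv q hq
    have c1 : ∀ r ∈ U, Dv v (Wfun a b F) r = cfun a b r * Dv v (Gfun F) r := by
      intro r hr
      rw [hWf, Dv_const_add, Dv_mul (hcd r) (diffAt hU hG hr), cfun_deriv, hv]
      ring
    have hDvG : ContDiffOn ℝ ∞ (Dv v (Gfun F)) U := Dv_contDiffOn hU hG v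
    have c2 : Dv v (Dv v (Wfun a b F)) q = cfun a b q * Dv v (Dv v (Gfun F)) q := by
      rw [Dv_congrOn hU c1 hq v, Dv_mul (hcd q) (diffAt hU hDvG hq), cfun_deriv, hv]
      ring
    have c3 : ∀ r ∈ U, Dv v (Gfun F) r = Dv (0,0,1) (Dv v F) r := by
      intro r hr; exact Dv_comm hU hF hr v (0,0,1)
    have c4 : Dv v (Dv v (Gfun F)) q = Dv v (Dv (0,0,1) (Dv v F)) q := Dv_congrOn hU c3 hq v
    have c5 : Dv v (Dv (0,0,1) (Dv v F)) q = Dv (0,0,1) (Dv v (Dv v F)) q :=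
      Dv_comm hU (Dv_contDiffOn hU hF v) hq v (0,0,1)
    rw [c2, c4, c5]
  have hD11 : ContDiffOn ℝ ∞ (Dv (1,0,0) (Dv (1,0,0) F)) U :=
    Dv_contDiffOn hU (Dv_contDiffOn hU hF _) _
  have hD22 : ContDiffOn ℝ ∞ (Dv (0,1,0) (Dv (0,1,0) F)) U :=
    Dv_contDiffOn hU (Dv_contDiffOn hU hF _) _
  have hD3E : ContDiffOn ℝ ∞ (Dv (0,0,1) (Efun F)) U := Dv_contDiffOn hU hE _
  have hD33E : ContDiffOn ℝ ∞ (Dv (0,0,1) (Dv (0,0,1) (Efun F))) U := Dv_contDiffOn hU hD3E _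
  have sum12 : Dv (1,0,0) (Dv (1,0,0) (Wfun a b F)) p + Dv (0,1,0) (Dv (0,1,0) (Wfun a b F)) p
      = -(cfun a b p * Dv (0,0,1) (Dv (0,0,1) (Dv (0,0,1) (Efun F))) p) := by
    rw [key12 (1,0,0) rfl p hp, key12 (0,1,0) rfl p hp]
    have e1 : Dv (0,0,1) (Dv (1,0,0) (Dv (1,0,0) F)) p + Dv (0,0,1) (Dv (0,1,0) (Dv (0,1,0) F)) p
        = Dv (0,0,1) (fun r => Dv (1,0,0) (Dv (1,0,0) F) r + Dv (0,1,0) (Dv (0,1,0) F) r) p :=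
      (Dv_add (diffAt hU hD11 hp) (diffAt hU hD22 hp)).symm
    have e2 : ∀ r ∈ U, Dv (1,0,0) (Dv (1,0,0) F) r + Dv (0,1,0) (Dv (0,1,0) F) r
        = -Dv (0,0,1) (Dv (0,0,1) (Efun F)) r := by
      intro r hr; have := ht r hr; linarith
    have e3 : Dv (0,0,1) (fun r => -Dv (0,0,1) (Dv (0,0,1) (Efun F)) r) p
        = -Dv (0,0,1) (Dv (0,0,1) (Dv (0,0,1) (Efun F))) p := Dv_neg
    calc cfun a b p * Dv (0,0,1) (Dv (1,0,0) (Dv (1,0,0) F)) p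
          + cfun a b p * Dv (0,0,1) (Dv (0,1,0) (Dv (0,1,0) F)) p
        = cfun a b p * (Dv (0,0,1) (Dv (1,0,0) (Dv (1,0,0) F)) p
            + Dv (0,0,1) (Dv (0,1,0) (Dv (0,1,0) F)) p) := by ring
      _ = cfun a b p * Dv (0,0,1)
            (fun r => Dv (1,0,0) (Dv (1,0,0) F) r + Dv (0,1,0) (Dv (0,1,0) F) r) p := by rw [e1]
      _ = cfun a b p * Dv (0,0,1) (fun r => -Dv (0,0,1) (Dv (0,0,1) (Efun F)) r) p := by
            rw [Dv_congrOn hU e2 hp]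
      _ = -(cfun a b p * Dv (0,0,1) (Dv (0,0,1) (Dv (0,0,1) (Efun F))) p) := by rw [e3]; ring
  -- z direction
  have hEG : ∀ r ∈ U, Dv (0,0,1) (Efun F) r = Efun F r * Gfun F r := by
    intro r hr; exact Dv_exp (diffAt hU hF hr)
  have hEW : ∀ r ∈ U, Efun F r * Wfun a b F r
      = a * Efun F r + cfun a b r * Dv (0,0,1) (Efun F) r := by
    intro r hr
    rw [hWf, hEG r hr]
    ring
  have z1 : ∀ r ∈ U, Dv (0,0,1) (fun s => Efun F s * Wfun a b F s) r
      = (a/2) * Dv (0,0,1) (Efun F) r + cfun a b r * Dv (0,0,1) (Dv (0,0,1) (Efun F)) r := by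
    intro r hr
    rw [Dv_congrOn hU hEW hr,
        Dv_add ((diffAt hU hE hr).const_mul a) ((hcd r).fun_mul (diffAt hU hD3E hr)),
        Dv_const_mul (diffAt hU hE hr) a,
        Dv_mul (hcd r) (diffAt hU hD3E hr), cfun_deriv]
    norm_num
    ring
  have z2 : Dv (0,0,1) (Dv (0,0,1) (fun s => Efun F s * Wfun a b F s)) p
      = cfun a b p * Dv (0,0,1) (Dv (0,0,1) (Dv (0,0,1) (Efun F))) p := by
    rw [Dv_congrOn hU z1 hp,
        Dv_add ((diffAt hU hD3E hp).const_mul (a/2)) ((hcd p).fun_mul (diffAt hU hD33E hp)),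
        Dv_const_mul (diffAt hU hD3E hp) (a/2),
        Dv_mul (hcd p) (diffAt hU hD33E hp), cfun_deriv]
    norm_num
  rw [sum12, z2]
  ring

/-- if `u` is a smooth solution of the SU(∞) Toda field equation on an open
`U ⊆ ℝ³`, then for any real constants `a, b`, the function
`w = a(1 − (1/2)z·u_z) + (1/2)b·u_z` satisfies the abelian monopole equation
`w_xx + w_yy + (e^u w)_zz = 0` on `U`. -/
theorem canonical_monopoles_on_toda_space
    (U : Set (ℝ × ℝ × ℝ)) (hU : IsOpen U)
    (u : ℝ → ℝ → ℝ → ℝ)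
    (hu : ContDiffOn ℝ (⊤ : ℕ∞) (fun p : ℝ × ℝ × ℝ => u p.1 p.2.1 p.2.2) U)
    (htoda : ∀ x y z : ℝ, (x, y, z) ∈ U →
      pdx (pdx u) x y z + pdy (pdy u) x y z +
        pdz (pdz (fun x' y' z' => Real.exp (u x' y' z'))) x y z = 0)
    (a b : ℝ)
    (w : ℝ → ℝ → ℝ → ℝ)
    (hw : ∀ x y z : ℝ,
      w x y z = a * (1 - (1/2) * z * pdz u x y z) + (1/2) * b * pdz u x y z) :
    ∀ x y z : ℝ, (x, y, z) ∈ U →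
      pdx (pdx w) x y z + pdy (pdy w) x y z +
        pdz (pdz (fun x' y' z' => Real.exp (u x' y' z') * w x' y' z')) x y z = 0 := by
  intro x y z hq
  set F : P3 → ℝ := fun p => u p.1 p.2.1 p.2.2 with hFdef
  have hF : ContDiffOn ℝ ∞ F U := hu.of_le (by simp)
  have hE : ContDiffOn ℝ ∞ (Efun F) U := Real.contDiff_exp.comp_contDiffOn hF
  have hW : ContDiffOn ℝ ∞ (Wfun a b F) U := Wfun_contDiffOn hU hF a b
  have hEWs : ContDiffOn ℝ ∞ (fun s => Efun F s * Wfun a b F s) U := hE.mul hW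
  have huF : ∀ p ∈ U, u p.1 p.2.1 p.2.2 = F p := fun p _ => rfl
  have heF : ∀ p ∈ U,
      (fun x' y' z' => Real.exp (u x' y' z')) p.1 p.2.1 p.2.2 = Efun F p := fun p _ => rfl
  -- w agrees with Wfun on U
  have hwW : ∀ p ∈ U, w p.1 p.2.1 p.2.2 = Wfun a b F p := by
    intro p hp
    rw [hw, pdz_eq_Dv hU hF huF p hp]
    rfl
  have hewW : ∀ p ∈ U, (fun x' y' z' => Real.exp (u x' y' z') * w x' y' z') p.1 p.2.1 p.2.2
      = Efun F p * Wfun a b F p := by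
    intro p hp
    show Real.exp (u p.1 p.2.1 p.2.2) * w p.1 p.2.1 p.2.2 = _
    rw [hwW p hp]
    rfl
  -- converted Toda equation
  have ht : ∀ p ∈ U, Dv (1,0,0) (Dv (1,0,0) F) p + Dv (0,1,0) (Dv (0,1,0) F) p
      + Dv (0,0,1) (Dv (0,0,1) (Efun F)) p = 0 := by
    rintro ⟨x', y', z'⟩ hp
    have h1 := pdx_eq_Dv hU (Dv_contDiffOn hU hF _) (pdx_eq_Dv hU hF huF) _ hp
    have h2 := pdy_eq_Dv hU (Dv_contDiffOn hU hF _) (pdy_eq_Dv hU hF huF) _ hp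
    have h3 := pdz_eq_Dv hU (Dv_contDiffOn hU hE _) (pdz_eq_Dv hU hE (f := fun x' y' z' => Real.exp (u x' y' z')) heF) _ hp
    have h0 := htoda x' y' z' hp
    rw [h1, h2, h3] at h0
    exact h0
  have K := core hU hF a b ht (x, y, z) hq
  have A : pdx (pdx w) x y z = Dv (1,0,0) (Dv (1,0,0) (Wfun a b F)) (x, y, z) :=
    pdx_eq_Dv hU (Dv_contDiffOn hU hW _) (pdx_eq_Dv hU hW hwW) (x, y, z) hq
  have B : pdy (pdy w) x y z = Dv (0,1,0) (Dv (0,1,0) (Wfun a b F)) (x, y, z) :=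
    pdy_eq_Dv hU (Dv_contDiffOn hU hW _) (pdy_eq_Dv hU hW hwW) (x, y, z) hq
  have C : pdz (pdz (fun x' y' z' => Real.exp (u x' y' z') * w x' y' z')) x y z
      = Dv (0,0,1) (Dv (0,0,1) (fun s => Efun F s * Wfun a b F s)) (x, y, z) :=
    pdz_eq_Dv hU (Dv_contDiffOn hU hEWs _) (pdz_eq_Dv hU hEWs (f := fun x' y' z' => Real.exp (u x' y' z') * w x' y' z') hewW) (x, y, z) hq
  rw [A, B, C]
  exact K
end

section
/- Let a > 0 be real, Ω ⊆ ℂ open, h, F holomorphic on Ω with F′ nonvanishing, and let u(x,y,z) = log( 4a·(z+h)(z+h̄)·|F′|² / (1 + a|F|²)² ) on U = {(x,y,z) : x+iy ∈ Ω, z + h(x+iy) ≠ 0}, which solves the SU(∞) Toda field equation. Then for any holomorphic function f on Ω, the smooth real-valued function w(x,y,z) = f/(2(z+h)) + f̄/(2(z+h̄)) (with f, h evaluated at x+iy and bars denoting complex conjugation) satisfies the abelian monopole equation w_xx + w_yy + (e^u w)_zz = 0 on U. -/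
open Complex ComplexConjugate InnerProductSpace Filter Topology Laplacian

theorem deriv_deriv_apply_add_smul {E F : Type*} [NormedAddCommGroup E] [NormedSpace ℝ E]
    [NormedAddCommGroup F] [NormedSpace ℝ F] {φ : E → F} {p v : E} {t : ℝ}
    (hφ : ContDiffAt ℝ 2 φ (p + t • v)) :
    deriv (fun s => deriv (fun r => φ (p + r • v)) s) t =
      iteratedFDeriv ℝ 2 φ (p + t • v) ![v, v] := by
  have hline : ∀ s : ℝ, HasDerivAt (fun r : ℝ => p + r • v) v s := fun s => by
    simpa using ((hasDerivAt_id s).smul_const v).const_add p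
  have hfirst : (fun s => deriv (fun r => φ (p + r • v)) s) =ᶠ[𝓝 t]
      fun s => fderiv ℝ φ (p + s • v) v := by
    have hnear := (hline t).continuousAt.eventually (hφ.eventually (by simp))
    filter_upwards [hnear] with s hs
    exact ((hs.differentiableAt (by simp)).hasFDerivAt.comp_hasDerivAt s (hline s)).deriv
  have hsecond : HasDerivAt (fun s => fderiv ℝ φ (p + s • v))
      (fderiv ℝ (fderiv ℝ φ) (p + t • v) v) t :=
    (((hφ.fderiv_right (m := 1) (by norm_num)).differentiableAt (by norm_num)).hasFDerivAt
      ).comp_hasDerivAt t (hline t)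
  rw [hfirst.deriv_eq, iteratedFDeriv_two_apply, (hsecond.clm_apply (hasDerivAt_const t v)).deriv]
  simp

theorem InnerProductSpace.HarmonicAt.deriv_deriv_add_deriv_deriv {F : Type*}
    [NormedAddCommGroup F] [NormedSpace ℝ F] {φ : ℂ → F} {x y : ℝ}
    (hφ : HarmonicAt φ (x + y * I)) :
    deriv (fun s : ℝ => deriv (fun r : ℝ => φ (r + y * I)) s) x +
      deriv (fun s : ℝ => deriv (fun r : ℝ => φ (x + r * I)) s) y = 0 := by
  have hx : (fun r : ℝ => φ (r + y * I)) = fun r => φ (y * I + r • (1 : ℂ)) := by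
    funext r; simp [add_comm]
  have hy : (fun r : ℝ => φ (x + r * I)) = fun r => φ (x + r • I) := by
    funext r; simp [real_smul]
  have ex : (y * I : ℂ) + x • (1 : ℂ) = x + y * I := by simp [add_comm]
  have ey : (x : ℂ) + y • I = x + y * I := by simp [real_smul]
  rw [hx, hy, deriv_deriv_apply_add_smul (ex ▸ hφ.1), deriv_deriv_apply_add_smul (ey ▸ hφ.1),
    ex, ey, ← congrFun (laplacian_eq_iteratedFDeriv_complexPlane φ)]
  exact hφ.2.self_of_nhds

theorem pdx_pdx_add_pdy_pdy_eq_zero {w : ℝ → ℝ → ℝ → ℝ} {φ : ℂ → ℝ} {x y z : ℝ}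
    (hφ : HarmonicAt φ (x + y * I)) (hw : ∀ x' y', w x' y' z = φ (x' + y' * I)) :
    pdx (pdx w) x y z + pdy (pdy w) x y z = 0 := by
  simp only [pdx, pdy, hw]
  exact hφ.deriv_deriv_add_deriv_deriv

theorem pdz_pdz_eq_zero_of_eventuallyEq_affine {g : ℝ → ℝ → ℝ → ℝ} {x y z α β : ℝ}
    (hg : (fun t => g x y t) =ᶠ[𝓝 z] fun t => α * t + β) :
    pdz (pdz g) x y z = 0 := by
  have hslope : (fun t => pdz g x y t) =ᶠ[𝓝 z] fun _ => α := by
    filter_upwards [hg.eventuallyEq_nhds] with t ht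
    rw [pdz, ht.deriv_eq, (((hasDerivAt_id' t).const_mul α).add_const β).deriv, mul_one]
  rw [pdz, hslope.deriv_eq, deriv_const]

theorem re_div_two_mul_add_conj_div (q K : ℂ) :
    (q / (2 * K) + conj q / (2 * conj K)).re = (q / K).re := by
  have hconj : conj q / (2 * conj K) = conj (q / (2 * K)) := by
    rw [map_div₀, map_mul, map_ofNat]
  rw [hconj, add_conj, ofReal_re, mul_comm 2 K, ← div_div, div_ofNat_re]
  ring

theorem normSq_mul_re_div (q : ℂ) {K : ℂ} (hK : K ≠ 0) :
    normSq K * (q / K).re = (q * conj K).re := by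
  have hK' := (normSq_pos.2 hK).ne'
  rw [div_re]
  field_simp
  simp [mul_re]

theorem re_mul_conj_ofReal_add (q H : ℂ) (t : ℝ) :
    (q * conj (t + H)).re = q.re * t + (q * conj H).re := by
  rw [map_add, conj_ofReal, mul_add, add_re, re_mul_ofReal]

theorem exp_log_toda_potential {a : ℝ} (ha : 0 < a) {p : ℂ} (hp : p ≠ 0) (r : ℂ) {K : ℂ}
    (hK : K ≠ 0) :
    Real.exp (Real.log (4 * a * normSq K * ‖p‖ ^ 2 / (1 + a * ‖r‖ ^ 2) ^ 2)) =
      4 * a * ‖p‖ ^ 2 / (1 + a * ‖r‖ ^ 2) ^ 2 * normSq K := by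
  have hK' := normSq_pos.2 hK
  have hp' := norm_pos_iff.2 hp
  rw [Real.exp_log (by positivity)]
  ring

theorem strachan_monopoles_general
    (a : ℝ) (ha : 0 < a)
    (Ω : Set ℂ) (hΩ : IsOpen Ω)
    (h F F' : ℂ → ℂ)
    (hh : DifferentiableOn ℂ h Ω)
    (hF' : ∀ ζ ∈ Ω, F' ζ ≠ 0)
    (u : ℝ → ℝ → ℝ → ℝ)
    (hu : ∀ x y z : ℝ,
      u x y z = Real.log (4 * a * Complex.normSq ((z : ℂ) + h (x + y * Complex.I)) *
        (‖F' (x + y * Complex.I)‖)^2 /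
        (1 + a * (‖F (x + y * Complex.I)‖)^2)^2))
    (f : ℂ → ℂ) (hf : DifferentiableOn ℂ f Ω)
    (w : ℝ → ℝ → ℝ → ℝ)
    (hw : ∀ x y z : ℝ,
      w x y z = (f (x + y * Complex.I) / (2 * ((z : ℂ) + h (x + y * Complex.I))) +
        (starRingEnd ℂ) (f (x + y * Complex.I)) /
          (2 * ((z : ℂ) + (starRingEnd ℂ) (h (x + y * Complex.I))))).re) :
    ∀ x y z : ℝ, (x + y * Complex.I) ∈ Ω → (z : ℂ) + h (x + y * Complex.I) ≠ 0 →
      pdx (pdx w) x y z + pdy (pdy w) x y z +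
        pdz (pdz (fun x' y' z' => Real.exp (u x' y' z') * w x' y' z')) x y z = 0 := by
  intro x y z hζ hz
  have hw_re : ∀ x' y' z' : ℝ, w x' y' z' = (f (x' + y' * I) / (z' + h (x' + y' * I))).re := by
    intro x' y' z'
    rw [hw, ← re_div_two_mul_add_conj_div, map_add, conj_ofReal]
  have hharmonic : pdx (pdx w) x y z + pdy (pdy w) x y z = 0 := by
    have hnhds := hΩ.mem_nhds hζ
    refine pdx_pdx_add_pdy_pdy_eq_zero (φ := fun ζ => (f ζ / (z + h ζ)).re) ?_
      fun x' y' => hw_re x' y' z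
    exact ((hf.analyticAt hnhds).div (analyticAt_const.add (hh.analyticAt hnhds)) hz).harmonicAt_re
  have haffine : pdz (pdz fun x' y' z' => Real.exp (u x' y' z') * w x' y' z') x y z = 0 := by
    set c := 4 * a * ‖F' (x + y * I)‖ ^ 2 / (1 + a * ‖F (x + y * I)‖ ^ 2) ^ 2
    refine pdz_pdz_eq_zero_of_eventuallyEq_affine (α := c * (f (x + y * I)).re)
      (β := c * (f (x + y * I) * conj (h (x + y * I))).re) ?_
    filter_upwards [(continuous_ofReal.add continuous_const).continuousAt.eventually_ne hz]
      with t (ht : (t : ℂ) + h (x + y * I) ≠ 0)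
    rw [hu, hw_re, exp_log_toda_potential ha (hF' _ hζ) _ ht, mul_assoc, normSq_mul_re_div _ ht,
      re_mul_conj_ofReal_add]
    ring
  rw [hharmonic, haffine, add_zero]

/-- for the explicit Toda solution
`u = log( 4a·(z+h)(z+h̄)·|F′|² / (1 + a|F|²)² )` on
`U = {(x,y,z) : x+iy ∈ Ω, z + h(x+iy) ≠ 0}`, and for any holomorphic `f` on `Ω`, the
real-valued function `w = f/(2(z+h)) + f̄/(2(z+h̄))` (expressed as the real part of the
corresponding complex expression) satisfies the abelian monopole equation
`w_xx + w_yy + (e^u w)_zz = 0` on `U`. -/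
theorem strachan_monopoles
    (a : ℝ) (ha : 0 < a)
    (Ω : Set ℂ) (hΩ : IsOpen Ω)
    (h F F' : ℂ → ℂ)
    (hh : DifferentiableOn ℂ h Ω)
    (hF : ∀ ζ ∈ Ω, HasDerivAt F (F' ζ) ζ)
    (hF' : ∀ ζ ∈ Ω, F' ζ ≠ 0)
    (u : ℝ → ℝ → ℝ → ℝ)
    (hu : ∀ x y z : ℝ,
      u x y z = Real.log (4 * a * Complex.normSq ((z : ℂ) + h (x + y * Complex.I)) *
        (‖F' (x + y * Complex.I)‖)^2 /
        (1 + a * (‖F (x + y * Complex.I)‖)^2)^2))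
    (f : ℂ → ℂ) (hf : DifferentiableOn ℂ f Ω)
    (w : ℝ → ℝ → ℝ → ℝ)
    (hw : ∀ x y z : ℝ,
      w x y z = (f (x + y * Complex.I) / (2 * ((z : ℂ) + h (x + y * Complex.I))) +
        (starRingEnd ℂ) (f (x + y * Complex.I)) /
          (2 * ((z : ℂ) + (starRingEnd ℂ) (h (x + y * Complex.I))))).re) :
    ∀ x y z : ℝ, (x + y * Complex.I) ∈ Ω → (z : ℂ) + h (x + y * Complex.I) ≠ 0 →
      pdx (pdx w) x y z + pdy (pdy w) x y z +
        pdz (pdz (fun x' y' z' => Real.exp (u x' y' z') * w x' y' z')) x y z = 0 :=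
  strachan_monopoles_general a ha Ω hΩ h F F' hh hF' u hu f hf w hw
end
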